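/- arXiv:2305.00968 — 9 statements merged into one kernel-verified Lean document; each statement's English description precedes it below -/
import Mathlib

section
/- Let δ be a limit ordinal and f an additive coloring of δ by a finite set T of colors (i.e., f assigns to each pair x < y < δ a color in T, such that f(x,z) is determined by f(x,y) and f(y,z) whenever x < y < z). Then there exists a subset J ⊆ δ, unbounded in δ, which is homogeneous for f: there is a color t₀ ∈ T with f(x,y) = t₀ for all x < y in J. -/
/-!
For `x < y < δ` say that `y` agrees with `x` if `f x z = f y z` for some `z < δ`; by additivity
the rows `f x ·` and `f y ·` then coincide from `z` on. Since `T` is finite, some `x₀` has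
unboundedly many agreeing `y`: otherwise one could thin `δ` to an unbounded set no two of whose
elements agree, and among `|T| + 1` of its elements two would get the same colour at a common `z`.
By pigeonhole, unboundedly many agreeing `y` also share the colour `c = f x₀ y`. Thinning these
once more, so that each lies beyond the agreement point of every smaller one, gives a set on which
`f x y = f x₀ y = c`.
-/

open Set Order

def UnboundedIn (δ : Ordinal) (J : Set Ordinal) : Prop :=
  ∀ β < δ, ∃ x ∈ J, β ≤ x

section UnboundedIn

variable {δ : Ordinal} {S : Set Ordinal}

theorem not_unboundedIn_iff : ¬UnboundedIn δ S ↔ ∃ β < δ, ∀ x ∈ S, x < β := by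
  simp [UnboundedIn]

theorem unboundedIn_Iio : UnboundedIn δ (Iio δ) := fun β hβ => ⟨β, hβ, le_rfl⟩

theorem exists_forall_lt_of_finite (hδ : IsSuccLimit δ) (hS : S.Finite) (hSδ : S ⊆ Iio δ) :
    ∃ β < δ, ∀ x ∈ S, x < β := by
  induction S, hS using Set.Finite.induction_on with
  | empty => exact ⟨0, hδ.pos, by simp⟩
  | @insert a S _ _ ih =>
    obtain ⟨β, hβδ, hβ⟩ := ih ((subset_insert a S).trans hSδ)
    refine ⟨max β (succ a), max_lt hβδ (hδ.succ_lt (hSδ (mem_insert a S))), ?_⟩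
    rintro x (rfl | hx)
    · exact (lt_succ x).trans_le (le_max_right _ _)
    · exact (hβ x hx).trans_le (le_max_left _ _)

theorem UnboundedIn.infinite (hδ : IsSuccLimit δ) (hS : UnboundedIn δ S) (hSδ : S ⊆ Iio δ) :
    S.Infinite := fun hfin => by
  obtain ⟨β, hβδ, hβ⟩ := exists_forall_lt_of_finite hδ hfin hSδ
  obtain ⟨x, hx, hβx⟩ := hS β hβδ
  exact (hβ x hx).not_ge hβx

theorem UnboundedIn.exists_unboundedIn_fiber {T : Type*} [Finite T] (hδ : IsSuccLimit δ)
    (hS : UnboundedIn δ S) (g : Ordinal → T) : ∃ c, UnboundedIn δ {y ∈ S | g y = c} := by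
  by_contra! h
  simp only [not_unboundedIn_iff] at h
  choose β hβδ hβ using h
  obtain ⟨B, hBδ, hB⟩ := exists_forall_lt_of_finite hδ (finite_range β) (range_subset_iff.2 hβδ)
  obtain ⟨y, hy, hBy⟩ := hS B hBδ
  exact ((hβ (g y) y ⟨hy, rfl⟩).trans (hB _ (mem_range_self _))).not_ge hBy

/-- Only a largest element of `S` can have its threshold `τ x` above the bound `β`. -/
theorem exists_forall_le_of_pairwise {τ : Ordinal → Ordinal} {β : Ordinal} (hβδ : β < δ)
    (hSβ : ∀ x ∈ S, x < β) (hτδ : ∀ x ∈ S, τ x < δ)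
    (hSτ : S.Pairwise fun x y => x < y → τ x ≤ y) : ∃ γ < δ, ∀ x ∈ S, τ x ≤ γ := by
  by_cases hmax : ∃ m ∈ S, ∀ x ∈ S, x ≤ m
  · obtain ⟨m, hm, hmax⟩ := hmax
    refine ⟨max β (τ m), max_lt hβδ (hτδ m hm), fun x hx => ?_⟩
    rcases (hmax x hx).lt_or_eq with hxm | rfl
    · exact (hSτ hx hm hxm.ne hxm).trans ((hSβ m hm).le.trans (le_max_left _ _))
    · exact le_max_right _ _
  · push Not at hmax
    refine ⟨β, hβδ, fun x hx => ?_⟩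
    obtain ⟨y, hy, hxy⟩ := hmax x hx
    exact (hSτ hx hy hxy.ne hxy).trans (hSβ y hy).le

theorem UnboundedIn.exists_subset_pairwise (hS : UnboundedIn δ S) (R : Ordinal → Ordinal → Prop)
    (hR : ∀ x ∈ S, ∃ β < δ, ∀ y ∈ S, β ≤ y → R x y) :
    ∃ J ⊆ S, UnboundedIn δ J ∧ ∀ x ∈ J, ∀ y ∈ J, x < y → R x y := by
  choose! τ hτδ hτR using hR
  -- A maximal set whose elements lie beyond the thresholds of the smaller ones is unbounded.
  obtain ⟨J, ⟨hJS, hJτ⟩, hJmax⟩ := zorn_subset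
    {J | J ⊆ S ∧ J.Pairwise fun x y => x < y → τ x ≤ y} fun c hc hchain =>
      ⟨⋃₀ c, ⟨sUnion_subset fun J hJ => (hc hJ).1,
        (pairwise_sUnion hchain.directedOn).2 fun J hJ => (hc hJ).2⟩,
        fun _ => subset_sUnion_of_mem⟩
  refine ⟨J, hJS, ?_, fun x hx y hy hxy => hτR x (hJS hx) y (hJS hy) (hJτ hx hy hxy.ne hxy)⟩
  by_contra hbdd
  obtain ⟨β, hβδ, hβ⟩ := not_unboundedIn_iff.1 hbdd
  obtain ⟨γ, hγδ, hγ⟩ :=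
    exists_forall_le_of_pairwise hβδ hβ (fun x hx => hτδ x (hJS hx)) hJτ
  obtain ⟨y, hyS, hy⟩ := hS (max β γ) (max_lt hβδ hγδ)
  have hJy : ∀ x ∈ J, x < y := fun x hx => (hβ x hx).trans_le ((le_max_left _ _).trans hy)
  have hJτy : (insert y J).Pairwise fun x y => x < y → τ x ≤ y :=
    hJτ.insert fun x hx _ => ⟨fun hyx => ((hJy x hx).trans hyx).false.elim,
      fun _ => (hγ x hx).trans ((le_max_right _ _).trans hy)⟩
  exact (hJy y (hJmax ⟨insert_subset hyS hJS, hJτy⟩ (subset_insert y J) (mem_insert y J))).false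

end UnboundedIn

section AdditiveColoring

variable {T : Type*} {δ : Ordinal} {f : Ordinal → Ordinal → T}

def IsAdditiveColoring (δ : Ordinal) (f : Ordinal → Ordinal → T) : Prop :=
  ∀ x₁ y₁ z₁ x₂ y₂ z₂ : Ordinal,
    x₁ < y₁ → y₁ < z₁ → z₁ < δ → x₂ < y₂ → y₂ < z₂ → z₂ < δ →
    f x₁ y₁ = f x₂ y₂ → f y₁ z₁ = f y₂ z₂ → f x₁ z₁ = f x₂ z₂

theorem IsAdditiveColoring.eq_of_le (hf : IsAdditiveColoring δ f) {x₁ x₂ z y : Ordinal}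
    (hx₁ : x₁ < z) (hx₂ : x₂ < z) (hzy : z ≤ y) (hy : y < δ) (h : f x₁ z = f x₂ z) :
    f x₁ y = f x₂ y := by
  rcases hzy.eq_or_lt with rfl | hzy
  · exact h
  · exact hf _ _ _ _ _ _ hx₁ hzy hy hx₂ hzy hy h rfl

def agreeSet (δ : Ordinal) (f : Ordinal → Ordinal → T) (x : Ordinal) : Set Ordinal :=
  {y | x < y ∧ ∃ z < δ, y < z ∧ f x z = f y z}

theorem agreeSet_subset_Iio (x : Ordinal) : agreeSet δ f x ⊆ Iio δ :=
  fun _ ⟨_, _, hzδ, hyz, _⟩ => hyz.trans hzδ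

theorem IsAdditiveColoring.exists_forall_eq_of_mem_agreeSet (hf : IsAdditiveColoring δ f)
    {x₀ x : Ordinal} (hx : x ∈ agreeSet δ f x₀) :
    ∃ β < δ, ∀ y, β ≤ y → y < δ → f x₀ y = f x y := by
  obtain ⟨hx₀x, z, hzδ, hxz, hfz⟩ := hx
  exact ⟨z, hzδ, fun y hzy hy => hf.eq_of_le (hx₀x.trans hxz) hxz hzy hy hfz⟩

theorem exists_unboundedIn_agreeSet [Finite T] (hδ : IsSuccLimit δ) (f : Ordinal → Ordinal → T) :
    ∃ x, UnboundedIn δ (agreeSet δ f x) := by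
  by_contra! h
  obtain ⟨J, hJδ, hJ, hJf⟩ := unboundedIn_Iio.exists_subset_pairwise
    (fun x y => y ∉ agreeSet δ f x) fun x _ => by
      obtain ⟨β, hβδ, hβ⟩ := not_unboundedIn_iff.1 (h x)
      exact ⟨β, hβδ, fun y _ hβy hy => (hβ y hy).not_ge hβy⟩
  obtain ⟨s, hsJ, hs, hcard⟩ := (hJ.infinite hδ hJδ).exists_subset_ncard_eq (Nat.card T + 1)
  obtain ⟨z, hzδ, hz⟩ := exists_forall_lt_of_finite hδ hs (hsJ.trans hJδ)
  obtain ⟨x, hx, y, hy, hxy, hfxy⟩ := exists_ne_map_eq_of_ncard_lt_of_maps_to (s := s) (t := univ)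
    (by simp [hcard]) (f := fun x => f x z) fun _ _ => mem_univ _
  rcases hxy.lt_or_gt with hxy | hyx
  · exact hJf x (hsJ hx) y (hsJ hy) hxy ⟨hxy, z, hzδ, hz y hy, hfxy⟩
  · exact hJf y (hsJ hy) x (hsJ hx) hyx ⟨hyx, z, hzδ, hz x hx, hfxy.symm⟩

end AdditiveColoring

/-- **Ramsey theorem for additive colorings of a limit ordinal** (Shelah, Thm 1.1).
If `δ` is a limit ordinal and `f` is an additive coloring of `δ` by a finite set `T`
of colors, then there is an unbounded homogeneous subset `J` of `δ`. -/
theorem additive_coloring_limit_ordinal_unbounded_homogeneous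
    (δ : Ordinal) (hδ : Order.IsSuccLimit δ) (T : Type) [Finite T]
    (f : Ordinal → Ordinal → T)
    (hadd : ∀ x₁ y₁ z₁ x₂ y₂ z₂ : Ordinal,
      x₁ < y₁ → y₁ < z₁ → z₁ < δ → x₂ < y₂ → y₂ < z₂ → z₂ < δ →
      f x₁ y₁ = f x₂ y₂ → f y₁ z₁ = f y₂ z₂ → f x₁ z₁ = f x₂ z₂) :
    ∃ J : Set Ordinal, J ⊆ Set.Iio δ ∧ (∀ β < δ, ∃ x ∈ J, β ≤ x) ∧
      ∃ t₀ : T, ∀ x ∈ J, ∀ y ∈ J, x < y → f x y = t₀ := by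
  have hf : IsAdditiveColoring δ f := hadd
  obtain ⟨x₀, hx₀⟩ := exists_unboundedIn_agreeSet hδ f
  obtain ⟨c, hc⟩ := hx₀.exists_unboundedIn_fiber hδ (f x₀)
  obtain ⟨J, hJ, hJunb, hJf⟩ := hc.exists_subset_pairwise (fun x y => f x₀ y = f x y)
    fun x hx => by
      obtain ⟨β, hβδ, hβ⟩ := hf.exists_forall_eq_of_mem_agreeSet hx.1
      exact ⟨β, hβδ, fun y hy hβy => hβ y hβy (agreeSet_subset_Iio x₀ hy.1)⟩
  refine ⟨J, fun y hy => agreeSet_subset_Iio x₀ (hJ hy).1, hJunb, c, fun x hx y hy hxy => ?_⟩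
  rw [← hJf x hx y hy hxy]
  exact (hJ hy).2
end

section
/- Let f be an additive coloring of a densely ordered set I (a linear order in which between any two elements there lies a third) by a finite set T of colors. Then there is a nonempty open interval (a,b) of I containing a subset J which is dense in (a,b) and homogeneous for f. -/
section ShelahAux

variable {I : Type} [LinearOrder I] [DenselyOrdered I] {T : Type} [Finite T]

/-- `B` is dense in the open interval `(a,b)`. -/
def DenseIn (B : Set I) (a b : I) : Prop :=
  ∀ x y : I, a < x → x < y → y < b → ∃ z ∈ B, x < z ∧ z < y

lemma DenseIn.mono {B B' : Set I} {a b : I} (h : B ⊆ B') (hd : DenseIn B a b) :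
    DenseIn B' a b := by
  intro x y hx hxy hy
  obtain ⟨z, hz, h1, h2⟩ := hd x y hx hxy hy
  exact ⟨z, h hz, h1, h2⟩

lemma DenseIn.pick {B : Set I} {a b u v : I} (hd : DenseIn B a b)
    (hau : a ≤ u) (huv : u < v) (hvb : v ≤ b) : ∃ z ∈ B, u < z ∧ z < v := by
  obtain ⟨m, hum, hmv⟩ := exists_between huv
  obtain ⟨m', hum', hm'm⟩ := exists_between hum
  obtain ⟨z, hz, h1, h2⟩ := hd m' m (lt_of_le_of_lt hau hum') hm'm (lt_of_lt_of_le hmv hvb)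
  exact ⟨z, hz, lt_trans hum' h1, lt_trans h2 hmv⟩

/-- The set of colors realized by pairs from `B`. -/
def colorsOf (f : I → I → T) (B : Set I) : Set T :=
  {t | ∃ x ∈ B, ∃ y ∈ B, x < y ∧ f x y = t}

lemma colorsOf_mono (f : I → I → T) {B B' : Set I} (h : B ⊆ B') :
    colorsOf f B ⊆ colorsOf f B' := by
  rintro t ⟨x, hx, y, hy, hxy, hf⟩
  exact ⟨x, h hx, y, h hy, hxy, hf⟩

/-- Pigeonhole: if `B` is dense in `(a,b)` and colored by `g` with colors in a finite
set `F`, then some color class is dense in some subinterval. -/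
lemma shelah_pigeonhole (g : I → T) :
    ∀ (n : ℕ) (F : Finset T) (B : Set I) (a b : I), F.card ≤ n → a < b →
      DenseIn B a b → (∀ z ∈ B, g z ∈ F) →
      ∃ t u v, a ≤ u ∧ u < v ∧ v ≤ b ∧ DenseIn {z | z ∈ B ∧ g z = t} u v := by
  intro n
  induction n with
  | zero =>
      intro F B a b hcard hab hd hg
      obtain ⟨z, hz, _, _⟩ := hd.pick le_rfl hab le_rfl
      have hF : F = ∅ := Finset.card_eq_zero.mp (Nat.le_zero.mp hcard)
      exact absurd (hg z hz) (by simp [hF])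
  | succ n ih =>
      intro F B a b hcard hab hd hg
      classical
      by_cases hne : F = ∅
      · obtain ⟨z, hz, _, _⟩ := hd.pick le_rfl hab le_rfl
        exact absurd (hg z hz) (by simp [hne])
      · by_cases hex : ∃ t ∈ F, DenseIn {z | z ∈ B ∧ g z = t} a b
        · obtain ⟨t, _, hdt⟩ := hex
          exact ⟨t, a, b, le_rfl, hab, le_rfl, hdt⟩
        · push_neg at hex
          obtain ⟨t, ht⟩ := Finset.nonempty_iff_ne_empty.mpr hne
          have hnd := hex t ht
          rw [DenseIn] at hnd; push_neg at hnd
          obtain ⟨x, y, hx, hxy, hy, hemp⟩ := hnd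
          have hd' : DenseIn (B ∩ Set.Ioo x y) x y := by
            intro p q hp hpq hq
            obtain ⟨z, hz, h1, h2⟩ := hd p q (lt_trans hx hp) hpq (lt_trans hq hy)
            exact ⟨z, ⟨hz, lt_trans hp h1, lt_trans h2 hq⟩, h1, h2⟩
          have hg' : ∀ z ∈ B ∩ Set.Ioo x y, g z ∈ F.erase t := by
            rintro z ⟨hzB, hz1, hz2⟩
            refine Finset.mem_erase.mpr ⟨?_, hg z hzB⟩
            intro hgz
            exact absurd (hemp z ⟨hzB, hgz⟩ hz1) (not_le.mpr hz2)
          have hcard' : (F.erase t).card ≤ n := by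
            have := Finset.card_erase_of_mem ht
            omega
          obtain ⟨t', u, v, h1, h2, h3, h4⟩ :=
            ih (F.erase t) (B ∩ Set.Ioo x y) x y hcard' hxy hd' hg'
          refine ⟨t', u, v, le_trans (le_of_lt hx) h1, h2, le_trans h3 (le_of_lt hy), ?_⟩
          exact h4.mono (by rintro z ⟨⟨hz, _⟩, hgz⟩; exact ⟨hz, hgz⟩)

/-- Minimization: a subinterval on which the realized color set is minimal, hence uniform. -/
lemma shelah_min_interval (f : I → I → T) (B : Set I) (a b : I) (hab : a < b) :
    ∃ u v, a ≤ u ∧ u < v ∧ v ≤ b ∧ ∀ p q, u ≤ p → p < q → q ≤ v →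
      colorsOf f (B ∩ Set.Ioo p q) = colorsOf f (B ∩ Set.Ioo u v) := by
  classical
  set K : Set ℕ :=
    {k | ∃ u v, a ≤ u ∧ u < v ∧ v ≤ b ∧ (colorsOf f (B ∩ Set.Ioo u v)).ncard = k} with hK
  have hKne : K.Nonempty := ⟨_, a, b, le_rfl, hab, le_rfl, rfl⟩
  obtain ⟨u, v, h1, h2, h3, h4⟩ := Nat.sInf_mem hKne
  refine ⟨u, v, h1, h2, h3, fun p q hp hpq hq => ?_⟩
  have hsub : colorsOf f (B ∩ Set.Ioo p q) ⊆ colorsOf f (B ∩ Set.Ioo u v) :=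
    colorsOf_mono f (Set.inter_subset_inter_right _ (Set.Ioo_subset_Ioo hp hq))
  refine Set.eq_of_subset_of_ncard_le hsub ?_ (Set.toFinite _)
  rw [h4]
  exact Nat.sInf_le ⟨p, q, le_trans h1 hp, hpq, le_trans hq h3, rfl⟩

lemma shelah_main (f : I → I → T)
    (hadd : ∀ x₁ y₁ z₁ x₂ y₂ z₂ : I, x₁ < y₁ → y₁ < z₁ → x₂ < y₂ → y₂ < z₂ →
      f x₁ y₁ = f x₂ y₂ → f y₁ z₁ = f y₂ z₂ → f x₁ z₁ = f x₂ z₂) :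
    ∀ (n : ℕ) (a b : I) (B : Set I), (colorsOf f B).ncard ≤ n → a < b →
      B ⊆ Set.Ioo a b → DenseIn B a b →
      ∃ a' b' : I, a' < b' ∧ ∃ J : Set I, J ⊆ Set.Ioo a' b' ∧ DenseIn J a' b' ∧
        ∃ t₀ : T, ∀ x ∈ J, ∀ y ∈ J, x < y → f x y = t₀ := by
  intro n
  induction n using Nat.strong_induction_on with
  | _ n ih =>
  intro a b B hcard hab hBsub hBd
  classical
  have := Fintype.ofFinite T
  have hrec : ∀ (B' : Set I) (a' b' : I), a' < b' → B' ⊆ Set.Ioo a' b' → DenseIn B' a' b' →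
      colorsOf f B' ⊆ colorsOf f B → ¬ colorsOf f B' = colorsOf f B →
      ∃ a' b' : I, a' < b' ∧ ∃ J : Set I, J ⊆ Set.Ioo a' b' ∧ DenseIn J a' b' ∧
        ∃ t₀ : T, ∀ x ∈ J, ∀ y ∈ J, x < y → f x y = t₀ := by
    intro B' a' b' h1 h2 h3 h4 h5
    have hlt : (colorsOf f B').ncard < n :=
      lt_of_lt_of_le (Set.ncard_lt_ncard (h4.ssubset_of_ne h5) (Set.toFinite _)) hcard
    exact ih _ hlt a' b' B' le_rfl h1 h2 h3
  -- pick a reference point x₀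
  obtain ⟨x₀, hx₀B, hax₀, hx₀b⟩ := hBd.pick le_rfl hab le_rfl
  -- left pigeonhole
  have hd' : DenseIn (B ∩ Set.Ioo x₀ b) x₀ b := by
    intro x y hx hxy hy
    obtain ⟨z, hz, h1, h2⟩ := hBd x y (lt_trans hax₀ hx) hxy hy
    exact ⟨z, ⟨hz, lt_trans hx h1, lt_trans h2 hy⟩, h1, h2⟩
  obtain ⟨t, u, v, hx₀u, huv, hvb, hPd⟩ :=
    shelah_pigeonhole (fun z => f x₀ z) (Fintype.card T) Finset.univ (B ∩ Set.Ioo x₀ b) x₀ b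
      (le_of_eq Finset.card_univ) hx₀b hd' (fun z _ => Finset.mem_univ _)
  set B₂ : Set I := {z | z ∈ B ∧ z ∈ Set.Ioo u v ∧ f x₀ z = t} with hB₂def
  have hB₂d : DenseIn B₂ u v := by
    intro x y hx hxy hy
    obtain ⟨z, hz, h1, h2⟩ := hPd x y hx hxy hy
    exact ⟨z, ⟨hz.1.1, ⟨lt_trans hx h1, lt_trans h2 hy⟩, hz.2⟩, h1, h2⟩
  have hB₂sub : B₂ ⊆ Set.Ioo u v := fun z hz => hz.2.1
  have hB₂B : B₂ ⊆ B := fun z hz => hz.1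
  have hx₀lt : ∀ z ∈ B₂, x₀ < z ∧ f x₀ z = t := fun z hz =>
    ⟨lt_of_le_of_lt hx₀u hz.2.1.1, hz.2.2⟩
  have hL : ∀ s ∈ colorsOf f B₂,
      ∃ x y z : I, x < y ∧ y < z ∧ f x y = t ∧ f y z = s ∧ f x z = t := by
    rintro s ⟨y, hy, z, hz, hyz, hf⟩
    exact ⟨x₀, y, z, (hx₀lt y hy).1, hyz, (hx₀lt y hy).2, hf, (hx₀lt z hz).2⟩
  have htS : t ∈ colorsOf f B := by
    obtain ⟨z, hz, _, _⟩ := hB₂d.pick le_rfl huv le_rfl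
    exact ⟨x₀, hx₀B, z, hB₂B hz, (hx₀lt z hz).1, (hx₀lt z hz).2⟩
  by_cases hS2 : colorsOf f B₂ = colorsOf f B
  swap
  · exact hrec B₂ u v huv hB₂sub hB₂d (colorsOf_mono f hB₂B) hS2
  -- right pigeonhole
  obtain ⟨z₀, hz₀, huz₀, hz₀v⟩ := hB₂d.pick le_rfl huv le_rfl
  have hd'' : DenseIn (B₂ ∩ Set.Ioo u z₀) u z₀ := by
    intro x y hx hxy hy
    obtain ⟨z, hz, h1, h2⟩ := hB₂d x y hx hxy (lt_trans hy hz₀v)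
    exact ⟨z, ⟨hz, lt_trans hx h1, lt_trans h2 hy⟩, h1, h2⟩
  obtain ⟨r, u₃, v₃, hu₃, hu₃v₃, hv₃, hQd⟩ :=
    shelah_pigeonhole (fun z => f z z₀) (Fintype.card T) Finset.univ (B₂ ∩ Set.Ioo u z₀) u z₀
      (le_of_eq Finset.card_univ) huz₀ hd'' (fun z _ => Finset.mem_univ _)
  set B₃ : Set I := {z | z ∈ B₂ ∧ z ∈ Set.Ioo u₃ v₃ ∧ f z z₀ = r} with hB₃def
  have hB₃d : DenseIn B₃ u₃ v₃ := by
    intro x y hx hxy hy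
    obtain ⟨z, hz, h1, h2⟩ := hQd x y hx hxy hy
    exact ⟨z, ⟨hz.1.1, ⟨lt_trans hx h1, lt_trans h2 hy⟩, hz.2⟩, h1, h2⟩
  have hB₃sub : B₃ ⊆ Set.Ioo u₃ v₃ := fun z hz => hz.2.1
  have hB₃B₂ : B₃ ⊆ B₂ := fun z hz => hz.1
  have hz₀lt : ∀ z ∈ B₃, z < z₀ ∧ f z z₀ = r := fun z hz =>
    ⟨lt_of_lt_of_le hz.2.1.2 hv₃, hz.2.2⟩
  have hR : ∀ s ∈ colorsOf f B₃,
      ∃ x y z : I, x < y ∧ y < z ∧ f x y = s ∧ f y z = r ∧ f x z = r := by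
    rintro s ⟨y, hy, z, hz, hyz, hf⟩
    exact ⟨y, z, z₀, hyz, (hz₀lt z hz).1, hf, (hz₀lt z hz).2, (hz₀lt y hy).2⟩
  have hrS : r ∈ colorsOf f B := by
    obtain ⟨z, hz, _, _⟩ := hB₃d.pick le_rfl hu₃v₃ le_rfl
    exact ⟨z, hB₂B (hB₃B₂ hz), z₀, hB₂B hz₀, (hz₀lt z hz).1, (hz₀lt z hz).2⟩
  by_cases hS3 : colorsOf f B₃ = colorsOf f B
  swap
  · refine hrec B₃ u₃ v₃ hu₃v₃ hB₃sub hB₃d ?_ hS3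
    exact subset_trans (colorsOf_mono f hB₃B₂) (by rw [hS2])
  -- t = r
  have htr : t = r := by
    obtain ⟨x1, y1, z1, h11, h12, h13, h14, h15⟩ := hL r (by rw [hS2]; exact hrS)
    obtain ⟨x2, y2, z2, h21, h22, h23, h24, h25⟩ := hR t (by rw [hS3]; exact htS)
    have := hadd x1 y1 z1 x2 y2 z2 h11 h12 h21 h22 (h13.trans h23.symm) (h14.trans h24.symm)
    rw [h15, h25] at this; exact this
  -- zero laws
  have hZ1 : ∀ s ∈ colorsOf f B,
      ∃ x y z : I, x < y ∧ y < z ∧ f x y = t ∧ f y z = s ∧ f x z = t := by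
    intro s hs; exact hL s (by rw [hS2]; exact hs)
  have hZ2 : ∀ s ∈ colorsOf f B,
      ∃ x y z : I, x < y ∧ y < z ∧ f x y = s ∧ f y z = t ∧ f x z = t := by
    intro s hs
    obtain ⟨x1, y1, z1, h1, h2, h3, h4, h5⟩ := hR s (by rw [hS3]; exact hs)
    rw [← htr] at h4 h5
    exact ⟨x1, y1, z1, h1, h2, h3, h4, h5⟩
  -- minimization
  obtain ⟨a₄, b₄, ha₄, hab₄, hb₄, hmin⟩ := shelah_min_interval f B₃ u₃ v₃ hu₃v₃
  set B₄ : Set I := B₃ ∩ Set.Ioo a₄ b₄ with hB₄def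
  have hB₄d : DenseIn B₄ a₄ b₄ := by
    intro x y hx hxy hy
    obtain ⟨z, hz, h1, h2⟩ := hB₃d x y (lt_of_le_of_lt ha₄ hx) hxy (lt_of_lt_of_le hy hb₄)
    exact ⟨z, ⟨hz, lt_trans hx h1, lt_trans h2 hy⟩, h1, h2⟩
  have hB₄B : B₄ ⊆ B := fun z hz => hB₂B (hB₃B₂ hz.1)
  by_cases hS4 : colorsOf f B₄ = colorsOf f B
  swap
  · refine hrec B₄ a₄ b₄ hab₄ Set.inter_subset_right hB₄d ?_ hS4
    exact subset_trans (colorsOf_mono f Set.inter_subset_left) (by rw [hS3])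
  -- t-pairs in every subinterval of (a₄, b₄)
  have htpair : ∀ p q, a₄ ≤ p → p < q → q ≤ b₄ →
      ∃ x ∈ B₄, ∃ y ∈ B₄, x < y ∧ x ∈ Set.Ioo p q ∧ y ∈ Set.Ioo p q ∧ f x y = t := by
    intro p q hp hpq hq
    have heq : colorsOf f (B₃ ∩ Set.Ioo p q) = colorsOf f B₄ := by
      rw [hB₄def]; exact hmin p q hp hpq hq
    have ht' : t ∈ colorsOf f (B₃ ∩ Set.Ioo p q) := by rw [heq, hS4]; exact htS
    obtain ⟨x, hx, y, hy, hxy, hf⟩ := ht'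
    exact ⟨x, ⟨hx.1, Set.Ioo_subset_Ioo hp hq hx.2⟩, y, ⟨hy.1, Set.Ioo_subset_Ioo hp hq hy.2⟩,
      hxy, hx.2, hy.2, hf⟩
  -- Zorn's lemma: a maximal t-homogeneous subset of B₄
  set 𝒥 : Set (Set I) := {J | J ⊆ B₄ ∧ ∀ x ∈ J, ∀ y ∈ J, x < y → f x y = t} with h𝒥def
  have hub : ∀ c ⊆ 𝒥, IsChain (· ⊆ ·) c → ∃ ub ∈ 𝒥, ∀ s ∈ c, s ⊆ ub := by
    intro c hc hchain
    refine ⟨⋃₀ c, ⟨?_, ?_⟩, fun s hs => Set.subset_sUnion_of_mem hs⟩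
    · exact Set.sUnion_subset fun s hs => (hc hs).1
    · intro x hx y hy hxy
      obtain ⟨s1, hs1, hxs⟩ := hx
      obtain ⟨s2, hs2, hys⟩ := hy
      rcases hchain.total hs1 hs2 with h | h
      · exact (hc hs2).2 x (h hxs) y hys hxy
      · exact (hc hs1).2 x hxs y (h hys) hxy
  obtain ⟨M, hM𝒥, hMmax⟩ := zorn_subset 𝒥 hub
  by_cases hMd : DenseIn M a₄ b₄
  · exact ⟨a₄, b₄, hab₄, M, subset_trans hM𝒥.1 Set.inter_subset_right, hMd, t, hM𝒥.2⟩
  · exfalso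
    rw [DenseIn] at hMd; push_neg at hMd
    obtain ⟨x, y, hx, hxy, hy, hemp⟩ := hMd
    obtain ⟨p, hpB₄, q, hqB₄, hpq, hpIoo, hqIoo, hfpq⟩ :=
      htpair x y (le_of_lt hx) hxy (le_of_lt hy)
    have key1 : ∀ k ∈ M, q < k → f q k = t := by
      intro k hkM hqk
      have hky : y ≤ k := hemp k hkM (lt_trans hqIoo.1 hqk)
      obtain ⟨p', hp'B₄, q', hq'B₄, hp'q', hp'Ioo, hq'Ioo, hfp'q'⟩ :=
        htpair q y (le_of_lt (lt_trans hx hqIoo.1)) hqIoo.2 (le_of_lt hy)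
      have hq'k : q' < k := lt_of_lt_of_le hq'Ioo.2 hky
      have hs₁ : f q' k ∈ colorsOf f B :=
        ⟨q', hB₄B hq'B₄, k, hB₄B (hM𝒥.1 hkM), hq'k, rfl⟩
      obtain ⟨α, β, γ, hαβ, hβγ, hc1, hc2, hc3⟩ := hZ1 (f q' k) hs₁
      have hp'k : f p' k = t := by
        have := hadd p' q' k α β γ hp'q' hq'k hαβ hβγ
          (hfp'q'.trans hc1.symm) hc2.symm
        rw [hc3] at this; exact this
      have hs₂ : f q p' ∈ colorsOf f B :=
        ⟨q, hB₄B hqB₄, p', hB₄B hp'B₄, hp'Ioo.1, rfl⟩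
      obtain ⟨α', β', γ', hαβ', hβγ', hc1', hc2', hc3'⟩ := hZ2 (f q p') hs₂
      have hp'k' : p' < k := lt_trans hp'q' hq'k
      have := hadd q p' k α' β' γ' hp'Ioo.1 hp'k' hαβ' hβγ'
        hc1'.symm (hp'k.trans hc2'.symm)
      rw [hc3'] at this; exact this
    have key2 : ∀ j ∈ M, j < q → f j q = t := by
      intro j hjM hjq
      have hjx : j ≤ x := by
        by_contra hc
        exact absurd (hemp j hjM (not_le.mp hc)) (not_le.mpr (lt_trans hjq hqIoo.2))
      have hjp : j < p := lt_of_le_of_lt hjx hpIoo.1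
      have hs : f j p ∈ colorsOf f B :=
        ⟨j, hB₄B (hM𝒥.1 hjM), p, hB₄B hpB₄, hjp, rfl⟩
      obtain ⟨α, β, γ, hαβ, hβγ, hc1, hc2, hc3⟩ := hZ2 (f j p) hs
      have := hadd j p q α β γ hjp hpq hαβ hβγ hc1.symm (hfpq.trans hc2.symm)
      rw [hc3] at this; exact this
    have hq𝒥 : insert q M ∈ 𝒥 := by
      constructor
      · exact Set.insert_subset hqB₄ hM𝒥.1
      · intro j hj k hk hjk
        rcases Set.mem_insert_iff.mp hj with hj1 | hj1
        · rcases Set.mem_insert_iff.mp hk with hk1 | hk1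
          · rw [hj1, hk1] at hjk; exact absurd hjk (lt_irrefl _)
          · rw [hj1]; rw [hj1] at hjk; exact key1 k hk1 hjk
        · rcases Set.mem_insert_iff.mp hk with hk1 | hk1
          · rw [hk1]; rw [hk1] at hjk; exact key2 j hj1 hjk
          · exact hM𝒥.2 j hj1 k hk1 hjk
    have hins : insert q M ⊆ M := hMmax hq𝒥 (Set.subset_insert q M)
    have hqM : q ∈ M := hins (Set.mem_insert q M)
    exact absurd (hemp q hqM hqIoo.1) (not_le.mpr hqIoo.2)

end ShelahAux

/-- **Ramsey theorem for additive colorings of dense orders** (Shelah, Thm 1.3).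
If `f` is an additive coloring of a dense linear order `I` by a finite set `T` of colors,
then some nonempty open interval `(a,b)` of `I` contains a subset `J` which is dense in
`(a,b)` and homogeneous for `f`. -/
theorem additive_coloring_dense_order_dense_homogeneous
    (I : Type) [LinearOrder I] [DenselyOrdered I] [Nontrivial I]
    (T : Type) [Finite T] (f : I → I → T)
    (hadd : ∀ x₁ y₁ z₁ x₂ y₂ z₂ : I,
      x₁ < y₁ → y₁ < z₁ → x₂ < y₂ → y₂ < z₂ →
      f x₁ y₁ = f x₂ y₂ → f y₁ z₁ = f y₂ z₂ → f x₁ z₁ = f x₂ z₂) :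
    ∃ a b : I, a < b ∧ ∃ J : Set I, J ⊆ Set.Ioo a b ∧
      (∀ x y : I, a < x → x < y → y < b → ∃ z ∈ J, x < z ∧ z < y) ∧
      ∃ t₀ : T, ∀ x ∈ J, ∀ y ∈ J, x < y → f x y = t₀ := by
  obtain ⟨x, y, hxy⟩ := exists_pair_ne I
  have hdense : ∀ a b : I, a < b → DenseIn (Set.Ioo a b) a b := by
    intro a b _ p q hp hpq hq
    obtain ⟨z, h1, h2⟩ := exists_between hpq
    exact ⟨z, ⟨lt_trans hp h1, lt_trans h2 hq⟩, h1, h2⟩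
  rcases hxy.lt_or_gt with h | h
  · exact shelah_main f hadd (colorsOf f (Set.Ioo x y)).ncard x y (Set.Ioo x y) le_rfl h
      (fun z hz => hz) (hdense x y h)
  · exact shelah_main f hadd (colorsOf f (Set.Ioo y x)).ncard y x (Set.Ioo y x) le_rfl h
      (fun z hz => hz) (hdense y x h)
end

section
/- If M is a dense linear order and I ⊆ M is a dense subset (i.e., for every x < y in M there is z ∈ I with x < z < y), then I can be partitioned into two sets J₁ and J₂, each of which is dense in M. -/
/-!
Inside `I`, which is itself densely ordered, it suffices to split a dense linear order into two
dense sets. Shrinking an interval until `#(Ioo p q)` is minimal gives an interval all of whose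
subintervals have the same infinite cardinality `κ`; there the `κ` many requests "a point of
colour `c` between `p` and `q`" can be met by pairwise distinct points, choosing greedily along a
well-order of the requests whose initial segments have fewer than `κ` elements. A maximal
disjoint family of such intervals meets every interval, and the colourings of its members
together split the whole order.
-/

open Set Cardinal Function

universe u

section InjectiveChoice

variable {ι α : Type u}

theorem exists_injective_forall_mem_of_mk_Iio_lt [LinearOrder ι] [WellFoundedLT ι]
    (s : ι → Set α) (hs : ∀ i, #(Iio i) < #(s i)) :
    ∃ f : ι → α, Injective f ∧ ∀ i, f i ∈ s i := by
  have avail : ∀ i (g : ∀ j, j < i → α), (s i \ range fun j : Iio i => g j j.2).Nonempty :=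
    fun i g => sdiff_nonempty.2 fun h =>
      ((mk_le_mk_of_subset h).trans mk_range_le).not_gt (hs i)
  let f : ι → α := wellFounded_lt.fix fun i g => (avail i g).some
  have hf : ∀ i, f i ∈ s i \ f '' Iio i := fun i => by
    rw [image_eq_range]
    convert (avail i fun j _ => f j).some_mem using 1
    exact wellFounded_lt.fix_eq _ i
  refine ⟨f, fun i j hij => ?_, fun i => (hf i).1⟩
  by_contra hne
  rcases lt_or_gt_of_ne hne with h | h
  · exact (hf j).2 ⟨i, h, hij⟩
  · exact (hf i).2 ⟨j, h, hij.symm⟩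

theorem exists_injective_forall_mem (s : ι → Set α) {κ : Cardinal} (hι : #ι ≤ κ)
    (hs : ∀ i, κ ≤ #(s i)) : ∃ f : ι → α, Injective f ∧ ∀ i, f i ∈ s i := by
  obtain ⟨e⟩ : Nonempty ((#ι).ord.ToType ≃ ι) := Cardinal.eq.1 (mk_ord_toType _)
  obtain ⟨f, hf, hfs⟩ := exists_injective_forall_mem_of_mk_Iio_lt (s ∘ e) fun b =>
    (mk_Iio_lt b (by simp)).trans_le ((mk_ord_toType _).le.trans (hι.trans (hs _)))
  exact ⟨f ∘ e.symm, hf.comp e.symm.injective, fun i => by simpa using hfs (e.symm i)⟩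

end InjectiveChoice

theorem exists_pairwiseDisjoint_forall_not_disjoint {ι α : Type*} (H : Set ι) (f : ι → Set α) :
    ∃ D ⊆ H, D.PairwiseDisjoint f ∧
      ∀ i ∈ H, (f i).Nonempty → ∃ j ∈ D, ¬Disjoint (f i) (f j) := by
  obtain ⟨D, hD⟩ : ∃ D, Maximal (fun D => D ⊆ H ∧ D.PairwiseDisjoint f) D :=
    zorn_subset _ fun c hc hchain => ⟨⋃₀ c,
      ⟨sUnion_subset fun t ht => (hc ht).1,
        (pairwiseDisjoint_sUnion hchain.directedOn).2 fun t ht => (hc ht).2⟩,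
      fun _ => subset_sUnion_of_mem⟩
  refine ⟨D, hD.prop.1, hD.prop.2, fun i hi hne => ?_⟩
  by_contra! hdisj
  have hiD : i ∈ D := hD.mem_of_prop_insert
    ⟨insert_subset hi hD.prop.1, hD.prop.2.insert fun j hj _ => hdisj j hj⟩
  exact hne.ne_empty (disjoint_self.1 (hdisj i hiD))

section DenseOrder

variable {α : Type u} [LinearOrder α]

def OrderDenseIn (s U : Set α) : Prop :=
  ∀ a b, a < b → Ioo a b ⊆ U → ∃ z ∈ s, a < z ∧ z < b

theorem OrderDenseIn.mono {s t U : Set α} (hs : OrderDenseIn s U) (hst : s ∩ U ⊆ t) :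
    OrderDenseIn t U := fun a b hab hU => by
  obtain ⟨z, hzs, hz⟩ := hs a b hab hU
  exact ⟨z, hst ⟨hzs, hU hz⟩, hz⟩

theorem exists_Ioo_subset_forall_mk_le {x y : α} (hxy : x < y) :
    ∃ u v, u < v ∧ Ioo u v ⊆ Ioo x y ∧
      ∀ p q, p < q → Ioo p q ⊆ Ioo u v → #(Ioo u v) ≤ #(Ioo p q) := by
  obtain ⟨⟨u, v⟩, ⟨huv, hsub⟩, hmin⟩ :=
    (InvImage.wf (fun p : α × α => #(Ioo p.1 p.2)) wellFounded_lt).has_min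
      {p | p.1 < p.2 ∧ Ioo p.1 p.2 ⊆ Ioo x y} ⟨(x, y), hxy, subset_rfl⟩
  exact ⟨u, v, huv, hsub, fun p q hpq hpq' => not_lt.1 (hmin (p, q) ⟨hpq, hpq'.trans hsub⟩)⟩

theorem exists_orderDenseIn_compl_of_forall_mk_le [DenselyOrdered α] {u v : α} (huv : u < v)
    (hmin : ∀ p q, p < q → Ioo p q ⊆ Ioo u v → #(Ioo u v) ≤ #(Ioo p q)) :
    ∃ s, OrderDenseIn s (Ioo u v) ∧ OrderDenseIn sᶜ (Ioo u v) := by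
  set U := Ioo u v
  have hκ : ℵ₀ ≤ #U := aleph0_le_mk_iff.2 (infinite_coe_iff.2 (Ioo_infinite huv))
  let ι := {p : U × U // p.1 < p.2} × Bool
  have hι : #ι ≤ #U := calc
    #ι ≤ #((U × U) × Bool) := mk_le_of_injective (f := Prod.map Subtype.val id)
      (Subtype.val_injective.prodMap injective_id)
    _ = #U * #U * 2 := by simp [mk_prod]
    _ = #U := by
      rw [mul_eq_self hκ]; exact Cardinal.mul_eq_left hκ (ofNat_lt_aleph0.le.trans hκ) two_ne_zero
  obtain ⟨f, hf, hfs⟩ := exists_injective_forall_mem (fun i : ι => Ioo (i.1.1.1 : α) i.1.1.2) hι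
    fun i => hmin _ _ i.1.2 (Ioo_subset_Ioo i.1.1.1.2.1.le i.1.1.2.2.2.le)
  have dense : ∀ c, OrderDenseIn (range fun p => f (p, c)) U := fun c a b hab hU => by
    obtain ⟨p, hap, hpb⟩ := exists_between hab
    obtain ⟨q, hpq, hqb⟩ := exists_between hpb
    let i : {p : U × U // p.1 < p.2} := ⟨(⟨p, hU ⟨hap, hpb⟩⟩, ⟨q, hU ⟨hap.trans hpq, hqb⟩⟩), hpq⟩
    exact ⟨_, ⟨i, rfl⟩, hap.trans (hfs (i, c)).1, (hfs (i, c)).2.trans hqb⟩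
  refine ⟨range fun p => f (p, false), dense false, (dense true).mono ?_⟩
  rintro _ ⟨⟨p, rfl⟩, -⟩ ⟨q, hq⟩
  simpa using congrArg Prod.snd (hf hq)

theorem exists_orderDenseIn_univ_compl_of_local [DenselyOrdered α]
    (h : ∀ x y : α, x < y → ∃ u v, u < v ∧ Ioo u v ⊆ Ioo x y ∧
      ∃ s, OrderDenseIn s (Ioo u v) ∧ OrderDenseIn sᶜ (Ioo u v)) :
    ∃ s : Set α, OrderDenseIn s univ ∧ OrderDenseIn sᶜ univ := by
  let H := {p : α × α | p.1 < p.2 ∧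
    ∃ s, OrderDenseIn s (Ioo p.1 p.2) ∧ OrderDenseIn sᶜ (Ioo p.1 p.2)}
  choose! σ hσ using fun p (hp : p ∈ H) => hp.2
  obtain ⟨D, hDH, hdisj, hmeet⟩ :=
    exists_pairwiseDisjoint_forall_not_disjoint H fun p => Ioo p.1 p.2
  let s := ⋃ p ∈ D, σ p ∩ Ioo p.1 p.2
  have mem_s : ∀ p ∈ D, ∀ z ∈ Ioo p.1 p.2, z ∈ s ↔ z ∈ σ p := by
    refine fun p hp z hz => ⟨fun hzs => ?_, fun hzσ => mem_biUnion hp ⟨hzσ, hz⟩⟩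
    obtain ⟨q, hq, hzσ, hzq⟩ := mem_iUnion₂.1 hzs
    obtain rfl : q = p := hdisj.elim hq hp (not_disjoint_iff.2 ⟨z, hzq, hz⟩)
    exact hzσ
  have glue : ∀ t, (∀ p ∈ D, OrderDenseIn t (Ioo p.1 p.2)) → OrderDenseIn t univ := by
    intro t ht x y hxy _
    obtain ⟨u, v, huv, hsub, hsplit⟩ := h x y hxy
    obtain ⟨p, hp, hne⟩ := hmeet (u, v) ⟨huv, hsplit⟩ (nonempty_Ioo.2 huv)
    rw [not_disjoint_iff_nonempty_inter, Ioo_inter_Ioo, nonempty_Ioo] at hne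
    obtain ⟨z, hzt, hz⟩ := ht p hp _ _ hne (Ioo_subset_Ioo (le_max_right _ _) (min_le_right _ _))
    exact ⟨z, hzt, hsub ⟨(le_max_left _ _).trans_lt hz.1, hz.2.trans_le (min_le_left _ _)⟩⟩
  refine ⟨s, glue s fun p hp => (hσ p (hDH hp)).1.mono ?_,
    glue sᶜ fun p hp => (hσ p (hDH hp)).2.mono ?_⟩
  · exact fun z hz => (mem_s p hp z hz.2).2 hz.1
  · exact fun z hz hzs => hz.1 ((mem_s p hp z hz.2).1 hzs)

theorem exists_orderDenseIn_univ_compl [DenselyOrdered α] :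
    ∃ s : Set α, OrderDenseIn s univ ∧ OrderDenseIn sᶜ univ :=
  exists_orderDenseIn_univ_compl_of_local fun _ _ hxy =>
    let ⟨u, v, huv, hsub, hmin⟩ := exists_Ioo_subset_forall_mk_le hxy
    ⟨u, v, huv, hsub, exists_orderDenseIn_compl_of_forall_mk_le huv hmin⟩

end DenseOrder

theorem OrderDenseIn.exists_mem_image_val {M : Type u} [LinearOrder M] {I : Set M}
    (hI : ∀ x y : M, x < y → ∃ z ∈ I, x < z ∧ z < y) {t : Set I} (ht : OrderDenseIn t univ)
    {x y : M} (hxy : x < y) : ∃ z ∈ Subtype.val '' t, x < z ∧ z < y := by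
  obtain ⟨b, hb, hxb, hby⟩ := hI x y hxy
  obtain ⟨a, ha, hxa, hab⟩ := hI x b hxb
  obtain ⟨z, hzt, haz, hzb⟩ := ht ⟨a, ha⟩ ⟨b, hb⟩ hab (subset_univ _)
  exact ⟨z, mem_image_of_mem _ hzt, hxa.trans haz, lt_trans (show (z : M) < b from hzb) hby⟩

theorem dense_subset_partition_two_dense_general
    (M : Type) [LinearOrder M] (I : Set M)
    (hI : ∀ x y : M, x < y → ∃ z ∈ I, x < z ∧ z < y) :
    ∃ J₁ J₂ : Set M, I = J₁ ∪ J₂ ∧ J₁ ∩ J₂ = ∅ ∧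
      (∀ x y : M, x < y → ∃ z ∈ J₁, x < z ∧ z < y) ∧
      (∀ x y : M, x < y → ∃ z ∈ J₂, x < z ∧ z < y) := by
  have : DenselyOrdered I := ⟨fun a b hab =>
    let ⟨z, hz, hab⟩ := hI a b hab
    ⟨⟨z, hz⟩, hab⟩⟩
  obtain ⟨s, hs, hsc⟩ := exists_orderDenseIn_univ_compl (α := I)
  refine ⟨Subtype.val '' s, Subtype.val '' sᶜ, ?_, ?_, fun _ _ => hs.exists_mem_image_val hI,
    fun _ _ => hsc.exists_mem_image_val hI⟩
  · rw [← image_union, union_compl_self, image_univ, Subtype.range_coe]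
  · rw [← image_inter Subtype.val_injective, inter_compl_self, image_empty]

/-- (Shelah, proof of Thm 6.2, part (2)(*).) If `M` is a dense linear order and `I ⊆ M`
is a dense subset, then `I` can be partitioned into two sets `J₁`, `J₂`, each dense in `M`. -/
theorem dense_subset_partition_two_dense
    (M : Type) [LinearOrder M] [DenselyOrdered M] (I : Set M)
    (hI : ∀ x y : M, x < y → ∃ z ∈ I, x < z ∧ z < y) :
    ∃ J₁ J₂ : Set M, I = J₁ ∪ J₂ ∧ J₁ ∩ J₂ = ∅ ∧
      (∀ x y : M, x < y → ∃ z ∈ J₁, x < z ∧ z < y) ∧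
      (∀ x y : M, x < y → ∃ z ∈ J₂, x < z ∧ z < y) :=
  dense_subset_partition_two_dense_general M I hI
end

section
/- Let λ be an infinite cardinal. There exists q < ω such that for all ordinals α, β < λ⁺: if α and β are both divisible by λ^q (ordinal exponentiation and divisibility) and cf(α) = cf(β), then α and β satisfy the same monadic second-order sentences of quantifier depth at most n, where q depends effectively on n. -/
/-- Monadic second-order formulas over a linear order with `m` unary predicates,
`k` free element variables and `l` free set variables (de Bruijn indexed). -/
inductive MSO (m : ℕ) : ℕ → ℕ → Type
  | lt {k l : ℕ} (i j : Fin k) : MSO m k l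
  | eq {k l : ℕ} (i j : Fin k) : MSO m k l
  | mem {k l : ℕ} (i : Fin k) (X : Fin l) : MSO m k l
  | pred {k l : ℕ} (p : Fin m) (i : Fin k) : MSO m k l
  | not {k l : ℕ} (φ : MSO m k l) : MSO m k l
  | and {k l : ℕ} (φ ψ : MSO m k l) : MSO m k l
  | exElem {k l : ℕ} (φ : MSO m (k + 1) l) : MSO m k l
  | exSet {k l : ℕ} (φ : MSO m k (l + 1)) : MSO m k l

/-- Satisfaction of an MSO formula in a linear order `α` with unary predicates `P`. -/
def MSO.Sat {m : ℕ} {α : Type*} [LinearOrder α] (P : Fin m → Set α) :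
    ∀ {k l : ℕ}, MSO m k l → (Fin k → α) → (Fin l → Set α) → Prop
  | _, _, .lt i j, e, _ => e i < e j
  | _, _, .eq i j, e, _ => e i = e j
  | _, _, .mem i X, e, s => e i ∈ s X
  | _, _, .pred p i, e, _ => e i ∈ P p
  | _, _, .not φ, e, s => ¬ φ.Sat P e s
  | _, _, .and φ ψ, e, s => φ.Sat P e s ∧ ψ.Sat P e s
  | _, _, .exElem φ, e, s => ∃ a : α, φ.Sat P (Fin.cons a e) s
  | _, _, .exSet φ, e, s => ∃ A : Set α, φ.Sat P e (Fin.cons A s)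

/-- Quantifier depth of an MSO formula. -/
def MSO.depth {m : ℕ} : ∀ {k l : ℕ}, MSO m k l → ℕ
  | _, _, .not φ => φ.depth
  | _, _, .and φ ψ => max φ.depth ψ.depth
  | _, _, .exElem φ => φ.depth + 1
  | _, _, .exSet φ => φ.depth + 1
  | _, _, _ => 0

/-- Satisfaction of an MSO sentence (no free variables). -/
def MSO.SatS {m : ℕ} {α : Type*} [LinearOrder α] (P : Fin m → Set α) (φ : MSO m 0 0) : Prop :=
  φ.Sat P (fun i => i.elim0) (fun i => i.elim0)

/-!
Monadic equivalence of depth `n` is decided by the Ehrenfeucht–Fraïssé game in which both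
players choose subsets, elements being played as singletons. The outcome of that game is
determined by a hereditarily finite invariant, so by pigeonhole `λ^Q ≡ λ^Q · λ^D` for some
`Q ≥ 1` and `D ≥ 2`; and the game is compatible with ordered sums (Feferman–Vaught).

Put `P = λ^Q`. Induction on `γ < λ⁺` gives `P·γ ≡ P·cf γ`: at a successor,
`P·γ + P ≡ P·cf γ + P·λ^D = P·λ^D ≡ P`, because `λ^D` absorbs `cf γ ≤ λ`; at a limit, `γ` is an
ordered sum of `cf γ` successor ordinals below `γ`, each of which contributes a copy of `P`.
Finally `cf (P·γ)` is `cf γ` for limit `γ` and `cf λ` for successor `γ`, while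
`P ≡ P·λ^D ≡ P·cf λ`.
-/

namespace MSO

universe u

variable {α β γ : Type*} [LinearOrder α] [LinearOrder β] [LinearOrder γ]

def Before (A B : Set α) : Prop := ∀ a ∈ A, ∀ b ∈ B, a < b

/-- On singletons these relations express `<`, `=` and `∈`; in an ordered sum they are determined
by the same relations between the parts in each summand (`AtomicEquiv.sigmaLex`). -/
structure AtomicEquiv {l : ℕ} (s : Fin l → Set α) (t : Fin l → Set β) : Prop where
  subset_iff : ∀ X Y, s X ⊆ s Y ↔ t X ⊆ t Y
  eq_empty_iff : ∀ X, s X = ∅ ↔ t X = ∅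
  before_iff : ∀ X Y, Before (s X) (s Y) ↔ Before (t X) (t Y)

def GameEquiv : ℕ → ∀ {l : ℕ}, (Fin l → Set α) → (Fin l → Set β) → Prop
  | 0, _, s, t => AtomicEquiv s t
  | n + 1, _, s, t => AtomicEquiv s t ∧
      (∀ A, ∃ B, GameEquiv n (Fin.cons A s) (Fin.cons B t)) ∧
      (∀ B, ∃ A, GameEquiv n (Fin.cons A s) (Fin.cons B t))

abbrev AtomicType (l : ℕ) : Type :=
  (Fin l → Fin l → Prop) × (Fin l → Prop) × (Fin l → Fin l → Prop)

abbrev Theory : ℕ → ℕ → Type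
  | 0, l => AtomicType l
  | n + 1, l => AtomicType l × Set (Theory n (l + 1))

instance Theory.finite : ∀ n l, Finite (Theory n l)
  | 0, _ => inferInstance
  | n + 1, l => have := Theory.finite n (l + 1); inferInstance

def atomicType {l : ℕ} (s : Fin l → Set α) : AtomicType l :=
  (fun X Y => s X ⊆ s Y, fun X => s X = ∅, fun X Y => Before (s X) (s Y))

def theory : ∀ (n : ℕ) {l : ℕ}, (Fin l → Set α) → Theory n l
  | 0, _, s => atomicType s
  | n + 1, _, s => (atomicType s, Set.range fun A => theory n (Fin.cons A s))

theorem atomicType_eq_iff {l : ℕ} {s : Fin l → Set α} {t : Fin l → Set β} :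
    atomicType s = atomicType t ↔ AtomicEquiv s t := by
  simp only [atomicType, Prod.mk.injEq, funext_iff, eq_iff_iff]
  exact ⟨fun ⟨h₁, h₂, h₃⟩ => ⟨h₁, h₂, h₃⟩, fun ⟨h₁, h₂, h₃⟩ => ⟨h₁, h₂, h₃⟩⟩

theorem theory_eq_iff : ∀ {n l : ℕ} {s : Fin l → Set α} {t : Fin l → Set β},
    theory n s = theory n t ↔ GameEquiv n s t
  | 0, _, _, _ => atomicType_eq_iff
  | n + 1, _, s, t => by
    simp only [theory, GameEquiv, Prod.mk.injEq, atomicType_eq_iff, ← theory_eq_iff,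
      Set.Subset.antisymm_iff, Set.range_subset_iff, Set.mem_range,
      eq_comm (a := theory n (Fin.cons _ s))]

namespace GameEquiv

variable {n l : ℕ} {s : Fin l → Set α} {t : Fin l → Set β}

theorem refl (n : ℕ) (s : Fin l → Set α) : GameEquiv n s s :=
  theory_eq_iff.1 rfl

theorem symm (h : GameEquiv n s t) : GameEquiv n t s :=
  theory_eq_iff.1 (theory_eq_iff.2 h).symm

theorem trans {u : Fin l → Set γ} (h : GameEquiv n s t) (h' : GameEquiv n t u) :
    GameEquiv n s u :=
  theory_eq_iff.1 ((theory_eq_iff.2 h).trans (theory_eq_iff.2 h'))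

theorem atomicEquiv : ∀ {n : ℕ}, GameEquiv n s t → AtomicEquiv s t
  | 0, h => h
  | _ + 1, h => h.1

private theorem cons_comp_cons_succ {X : Type*} {l' : ℕ} (A : X) (s : Fin l → X)
    (ρ : Fin l' → Fin l) : Fin.cons A s ∘ Fin.cons 0 (Fin.succ ∘ ρ) = Fin.cons A (s ∘ ρ) :=
  funext fun i => Fin.cases rfl (fun _ => rfl) i

theorem comp : ∀ {n l l' : ℕ} {s : Fin l → Set α} {t : Fin l → Set β},
    GameEquiv n s t → ∀ ρ : Fin l' → Fin l, GameEquiv n (s ∘ ρ) (t ∘ ρ)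
  | 0, _, _, _, _, h, ρ => ⟨fun X Y => h.subset_iff (ρ X) (ρ Y), fun X => h.eq_empty_iff (ρ X),
      fun X Y => h.before_iff (ρ X) (ρ Y)⟩
  | n + 1, _, _, s, t, h, ρ => by
    refine ⟨comp (n := 0) h.atomicEquiv ρ, fun A => ?_, fun B => ?_⟩
    · obtain ⟨B, hB⟩ := h.2.1 A
      exact ⟨B, by simpa only [cons_comp_cons_succ] using hB.comp (Fin.cons 0 (Fin.succ ∘ ρ))⟩
    · obtain ⟨A, hA⟩ := h.2.2 B
      exact ⟨A, by simpa only [cons_comp_cons_succ] using hA.comp (Fin.cons 0 (Fin.succ ∘ ρ))⟩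

end GameEquiv

theorem before_image_iff (f : α ≃o β) {A B : Set α} :
    Before (f '' A) (f '' B) ↔ Before A B := by
  simp only [Before, Set.forall_mem_image, f.lt_iff_lt]

theorem gameEquiv_image (f : α ≃o β) :
    ∀ (n : ℕ) {l : ℕ} (s : Fin l → Set α), GameEquiv n s (Set.image f ∘ s)
  | 0, _, _ => ⟨fun _ _ => (Set.image_subset_image_iff f.injective).symm,
      fun _ => Set.image_eq_empty.symm, fun _ _ => (before_image_iff f).symm⟩
  | n + 1, _, s => by
    refine ⟨gameEquiv_image f 0 s, fun A => ⟨f '' A, ?_⟩, fun B => ⟨f ⁻¹' B, ?_⟩⟩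
    · simpa only [Fin.comp_cons] using gameEquiv_image f n (Fin.cons A s)
    · simpa only [Fin.comp_cons, Set.image_preimage_eq B f.surjective]
        using gameEquiv_image f n (Fin.cons (f ⁻¹' B) s)

theorem gameEquiv_nil_of_orderIso (f : α ≃o β) (n : ℕ) :
    GameEquiv n (![] : Fin 0 → Set α) (![] : Fin 0 → Set β) := by
  simpa only [Matrix.empty_eq (Set.image f ∘ ![])] using gameEquiv_image f n ![]

/-- A position with elements `e` and sets `s`, with each element played as a singleton. -/
def position {X : Type*} {k l : ℕ} (e : Fin k → X) (s : Fin l → Set X) : Fin (k + l) → Set X :=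
  Fin.append (fun i => {e i}) s

def consElemIndex (k l : ℕ) : Fin (k + 1 + l) → Fin (k + l + 1) :=
  Fin.addCases (Fin.cases 0 fun i => (Fin.castAdd l i).succ) fun X => (Fin.natAdd k X).succ

def consSetIndex (k l : ℕ) : Fin (k + (l + 1)) → Fin (k + l + 1) :=
  Fin.addCases (fun i => (Fin.castAdd l i).succ) (Fin.cases 0 fun X => (Fin.natAdd k X).succ)

theorem position_cons_elem {X : Type*} {k l : ℕ} (a : X) (e : Fin k → X) (s : Fin l → Set X) :
    position (Fin.cons a e) s = Fin.cons {a} (position e s) ∘ consElemIndex k l := by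
  funext j
  induction j using Fin.addCases with
  | left i => induction i using Fin.cases <;> simp [position, consElemIndex]
  | right X => simp [position, consElemIndex]

theorem position_cons_set {X : Type*} {k l : ℕ} (e : Fin k → X) (A : Set X) (s : Fin l → Set X) :
    position e (Fin.cons A s) = Fin.cons A (position e s) ∘ consSetIndex k l := by
  funext j
  induction j using Fin.addCases with
  | left i => simp [position, consSetIndex]
  | right X => induction X using Fin.cases <;> simp [position, consSetIndex]

theorem GameEquiv.eq_singleton {n l : ℕ} {s : Fin l → Set α} {t : Fin l → Set β} {a : α}
    {B : Set β} (h : GameEquiv (n + 1) (Fin.cons {a} s) (Fin.cons B t)) : ∃ b, B = {b} := by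
  obtain ⟨b, hb⟩ := Set.nonempty_iff_ne_empty.2 fun hB =>
    Set.singleton_ne_empty a ((h.atomicEquiv.eq_empty_iff 0).2 hB)
  refine ⟨b, (Set.nonempty_of_mem hb).subset_singleton_iff.1 ?_⟩
  -- Spoiler plays `{b}`; Duplicator's answer must be `{a}`, which forces `B ⊆ {b}`.
  obtain ⟨D, hD⟩ := h.2.2 {b}
  have hD' := hD.atomicEquiv
  have hDa : D = {a} := by
    refine (Set.nonempty_iff_ne_empty.2 fun hD0 => ?_).subset_singleton_iff.1 ?_
    · exact Set.singleton_ne_empty b ((hD'.eq_empty_iff 0).1 hD0)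
    · exact (hD'.subset_iff 0 1).2 (Set.singleton_subset_iff.2 hb)
  exact (hD'.subset_iff 1 0).1 (by simp [hDa])

section Moves

variable {n k l : ℕ} {e : Fin k → α} {s : Fin l → Set α} {f : Fin k → β} {t : Fin l → Set β}

theorem GameEquiv.exists_elem_move (h : GameEquiv (n + 2) (position e s) (position f t))
    (a : α) : ∃ b, GameEquiv (n + 1) (position (Fin.cons a e) s) (position (Fin.cons b f) t) := by
  obtain ⟨B, hB⟩ := h.2.1 {a}
  obtain ⟨b, rfl⟩ := hB.eq_singleton
  exact ⟨b, by simpa only [position_cons_elem] using hB.comp (consElemIndex k l)⟩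

theorem GameEquiv.exists_set_move (h : GameEquiv (n + 1) (position e s) (position f t))
    (A : Set α) : ∃ B, GameEquiv n (position e (Fin.cons A s)) (position f (Fin.cons B t)) := by
  obtain ⟨B, hB⟩ := h.2.1 A
  exact ⟨B, by simpa only [position_cons_set] using hB.comp (consSetIndex k l)⟩

end Moves

theorem sat_iff_of_gameEquiv {k l n : ℕ} {φ : MSO 0 k l} {e : Fin k → α} {s : Fin l → Set α}
    {f : Fin k → β} {t : Fin l → Set β} {P : Fin 0 → Set α} {P' : Fin 0 → Set β}
    (h : GameEquiv n (position e s) (position f t)) (hφ : φ.depth < n) :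
    φ.Sat P e s ↔ φ.Sat P' f t := by
  induction φ generalizing n with
  | @lt k l i j =>
    simpa [MSO.Sat, position, Before] using
      h.atomicEquiv.before_iff (Fin.castAdd l i) (Fin.castAdd l j)
  | @eq k l i j =>
    simpa [MSO.Sat, position] using h.atomicEquiv.subset_iff (Fin.castAdd l i) (Fin.castAdd l j)
  | @mem k l i X =>
    simpa [MSO.Sat, position] using h.atomicEquiv.subset_iff (Fin.castAdd l i) (Fin.natAdd k X)
  | pred p => exact p.elim0
  | not φ ih => exact not_congr (ih h hφ)
  | and φ ψ ihφ ihψ =>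
    rw [MSO.depth, max_lt_iff] at hφ
    exact and_congr (ihφ h hφ.1) (ihψ h hφ.2)
  | exElem φ ih =>
    rw [MSO.depth] at hφ
    obtain ⟨n, rfl⟩ : ∃ m, n = m + 2 := ⟨n - 2, by omega⟩
    constructor
    · rintro ⟨a, ha⟩
      obtain ⟨b, hb⟩ := h.exists_elem_move a
      exact ⟨b, (ih hb (by omega)).1 ha⟩
    · rintro ⟨b, hb⟩
      obtain ⟨a, ha⟩ := h.symm.exists_elem_move b
      exact ⟨a, (ih ha.symm (by omega)).2 hb⟩
  | exSet φ ih =>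
    rw [MSO.depth] at hφ
    obtain ⟨n, rfl⟩ : ∃ m, n = m + 1 := ⟨n - 1, by omega⟩
    constructor
    · rintro ⟨A, hA⟩
      obtain ⟨B, hB⟩ := h.exists_set_move A
      exact ⟨B, (ih hB (by omega)).1 hA⟩
    · rintro ⟨B, hB⟩
      obtain ⟨A, hA⟩ := h.symm.exists_set_move B
      exact ⟨A, (ih hA.symm (by omega)).2 hB⟩

section SigmaLex

variable {ι : Type*} {A B : ι → Type*}

def slice (i : ι) (S : Set (Σₗ j, A j)) : Set (A i) := (fun x => toLex ⟨i, x⟩) ⁻¹' S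

def glue (T : ∀ i, Set (A i)) : Set (Σₗ j, A j) := {p | (ofLex p).2 ∈ T (ofLex p).1}

theorem slice_glue (T : ∀ i, Set (A i)) (i : ι) : slice i (glue T) = T i := rfl

theorem subset_iff_forall_slice {S T : Set (Σₗ j, A j)} :
    S ⊆ T ↔ ∀ i, slice i S ⊆ slice i T :=
  ⟨fun h _ _ hx => h hx, fun h ⟨i, _⟩ hx => h i hx⟩

theorem eq_empty_iff_forall_slice {S : Set (Σₗ j, A j)} : S = ∅ ↔ ∀ i, slice i S = ∅ := by
  simp only [Set.eq_empty_iff_forall_notMem, slice, Set.mem_preimage]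
  exact ⟨fun h i x => h _, fun h ⟨i, x⟩ => h i x⟩

variable [LinearOrder ι] [∀ i, LinearOrder (A i)] [∀ i, LinearOrder (B i)]

theorem before_iff_forall_slice {S T : Set (Σₗ j, A j)} :
    Before S T ↔ (∀ i, Before (slice i S) (slice i T)) ∧
      ∀ i j, j ≤ i → slice i S ≠ ∅ → slice j T ≠ ∅ → i = j := by
  simp only [← Set.nonempty_iff_ne_empty]
  constructor
  · intro h
    refine ⟨fun i a ha b hb => ?_, fun i j hji ⟨a, ha⟩ ⟨b, hb⟩ => ?_⟩
    · exact ((Sigma.Lex.lt_def.1 (h _ ha _ hb)).resolve_left (lt_irrefl i)).elim fun _ h => h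
    · rcases Sigma.Lex.lt_def.1 (h _ ha _ hb) with hij | ⟨hij, -⟩
      exacts [absurd hij (not_lt.2 hji), hij]
  · rintro ⟨h₁, h₂⟩ ⟨i, a⟩ ha ⟨j, b⟩ hb
    rcases lt_trichotomy i j with hij | rfl | hij
    · exact Sigma.Lex.lt_def.2 (Or.inl hij)
    · exact Sigma.Lex.lt_def.2 (Or.inr ⟨rfl, h₁ i a ha b hb⟩)
    · exact absurd (h₂ i j hij.le ⟨a, ha⟩ ⟨b, hb⟩) hij.ne'

theorem AtomicEquiv.sigmaLex {l : ℕ} {s : Fin l → Set (Σₗ i, A i)}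
    {t : Fin l → Set (Σₗ i, B i)} (h : ∀ i, AtomicEquiv (slice i ∘ s) (slice i ∘ t)) :
    AtomicEquiv s t where
  subset_iff X Y := by
    simp only [subset_iff_forall_slice]
    exact forall_congr' fun i => (h i).subset_iff X Y
  eq_empty_iff X := by
    simp only [eq_empty_iff_forall_slice (S := s X), eq_empty_iff_forall_slice (S := t X)]
    exact forall_congr' fun i => (h i).eq_empty_iff X
  before_iff X Y := by
    simp only [before_iff_forall_slice]
    refine and_congr (forall_congr' fun i => (h i).before_iff X Y) ?_
    refine forall₂_congr fun i j => imp_congr_right fun _ => ?_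
    exact imp_congr (not_congr ((h i).eq_empty_iff X))
      (imp_congr (not_congr ((h j).eq_empty_iff Y)) Iff.rfl)

theorem GameEquiv.sigmaLex :
    ∀ {n l : ℕ} {s : Fin l → Set (Σₗ i, A i)} {t : Fin l → Set (Σₗ i, B i)},
      (∀ i, GameEquiv n (slice i ∘ s) (slice i ∘ t)) → GameEquiv n s t
  | 0, _, _, _, h => AtomicEquiv.sigmaLex h
  | n + 1, _, s, t, h => by
    refine ⟨AtomicEquiv.sigmaLex fun i => (h i).atomicEquiv, fun S => ?_, fun T => ?_⟩
    · choose T hT using fun i => (h i).2.1 (slice i S)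
      refine ⟨glue T, GameEquiv.sigmaLex fun i => ?_⟩
      simpa only [Fin.comp_cons, slice_glue] using hT i
    · choose S hS using fun i => (h i).2.2 (slice i T)
      refine ⟨glue S, GameEquiv.sigmaLex fun i => ?_⟩
      simpa only [Fin.comp_cons, slice_glue] using hS i

end SigmaLex

open Ordinal Set

def OrdEquiv (n : ℕ) (a b : Ordinal.{u}) : Prop :=
  GameEquiv n (![] : Fin 0 → Set (Iio a)) (![] : Fin 0 → Set (Iio b))

namespace OrdEquiv

variable {n : ℕ} {a b c : Ordinal.{u}}

theorem refl (n : ℕ) (a : Ordinal.{u}) : OrdEquiv n a a := GameEquiv.refl n _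

theorem symm (h : OrdEquiv n a b) : OrdEquiv n b a := GameEquiv.symm h

theorem trans (h : OrdEquiv n a b) (h' : OrdEquiv n b c) : OrdEquiv n a c := GameEquiv.trans h h'

theorem satS_iff (h : OrdEquiv (n + 1) a b) {φ : MSO 0 0 0} (hφ : φ.depth ≤ n)
    {P : Fin 0 → Set (Iio a)} {P' : Fin 0 → Set (Iio b)} : φ.SatS P ↔ φ.SatS P' :=
  sat_iff_of_gameEquiv (by unfold OrdEquiv at h; convert h using 2 <;> exact Matrix.empty_eq _)
    (Nat.lt_succ_of_le hφ)

end OrdEquiv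

/-- `e` is the ordered sum of the ordinals `d i`, the `i`-th summand occupying
`[G i, G i + d i)`. -/
structure IsOrderedSum {ι : Type*} [LinearOrder ι] (G d : ι → Ordinal.{u}) (e : Ordinal.{u}) :
    Prop where
  add_le_of_lt : ∀ ⦃i j⦄, i < j → G i + d i ≤ G j
  add_le : ∀ i, G i + d i ≤ e
  exists_mem : ∀ o < e, ∃ i, G i ≤ o ∧ o < G i + d i

namespace IsOrderedSum

variable {ι : Type*} [LinearOrder ι] {G d : ι → Ordinal.{u}} {e : Ordinal.{u}}

noncomputable def orderIso (h : IsOrderedSum G d e) : (Σₗ i, Iio (d i)) ≃o Iio e := by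
  refine StrictMono.orderIsoOfSurjective
    (fun p => ⟨G (ofLex p).1 + (ofLex p).2, ?_⟩) ?_ fun o => ?_
  · exact ((add_lt_add_iff_left _).2 (ofLex p).2.2).trans_le (h.add_le _)
  · rintro ⟨i, x⟩ ⟨j, y⟩ (⟨_, _, hij⟩ | ⟨_, _, hxy⟩)
    · exact ((add_lt_add_iff_left _).2 x.2).trans_le ((h.add_le_of_lt hij).trans le_self_add)
    · exact (add_lt_add_iff_left (G i)).2 hxy
  · obtain ⟨i, hGo, hod⟩ := h.exists_mem o o.2
    refine ⟨toLex ⟨i, o - G i, ?_⟩, Subtype.ext (Ordinal.add_sub_cancel_of_le hGo)⟩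
    rwa [mem_Iio, ← add_lt_add_iff_left (G i), Ordinal.add_sub_cancel_of_le hGo]

theorem mul_left (h : IsOrderedSum G d e) (P : Ordinal.{u}) :
    IsOrderedSum (fun i => P * G i) (fun i => P * d i) (P * e) where
  add_le_of_lt i j hij := by rw [← mul_add]; exact mul_le_mul_right (h.add_le_of_lt hij) P
  add_le i := by rw [← mul_add]; exact mul_le_mul_right (h.add_le i) P
  exists_mem o ho := by
    have hP : P ≠ 0 := by rintro rfl; simp at ho
    -- Write `o = P * q + r` with `r < P`; then `q < e`, and the summand containing `q` works.
    have hqo : P * (o / P) + o % P = o := Ordinal.div_add_mod o P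
    obtain ⟨i, hGq, hqd⟩ := h.exists_mem (o / P)
      (lt_of_mul_lt_mul_left' ((le_self_add.trans hqo.le).trans_lt ho))
    refine ⟨i, (mul_le_mul_right hGq P).trans (le_self_add.trans hqo.le), ?_⟩
    calc o = P * (o / P) + o % P := hqo.symm
      _ < P * (o / P) + P := by gcongr; exact Ordinal.mod_lt o hP
      _ = P * (o / P + 1) := (mul_add_one P _).symm
      _ ≤ P * (G i + d i) := mul_le_mul_right (Order.add_one_le_of_lt hqd) P
      _ = P * G i + P * d i := mul_add P _ _

end IsOrderedSum

theorem OrdEquiv.of_isOrderedSum {n : ℕ} {ι : Type*} [LinearOrder ι]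
    {G d G' d' : ι → Ordinal.{u}} {e e' : Ordinal.{u}} (h : IsOrderedSum G d e)
    (h' : IsOrderedSum G' d' e') (hd : ∀ i, OrdEquiv n (d i) (d' i)) : OrdEquiv n e e' := by
  have hsum : GameEquiv n (![] : Fin 0 → Set (Σₗ i, Iio (d i)))
      (![] : Fin 0 → Set (Σₗ i, Iio (d' i))) :=
    GameEquiv.sigmaLex fun i => by
      rw [Matrix.empty_eq (slice i ∘ ![]), Matrix.empty_eq (slice i ∘ ![])]
      exact hd i
  exact (gameEquiv_nil_of_orderIso h.orderIso.symm n).trans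
    (hsum.trans (gameEquiv_nil_of_orderIso h'.orderIso n))

theorem isOrderedSum_add (a b : Ordinal.{u}) :
    IsOrderedSum (fun i : Bool => bif i then a else 0) (fun i => bif i then b else a) (a + b) where
  add_le_of_lt := by rintro (_ | _) (_ | _) h <;> revert h <;> simp
  add_le := by rintro (_ | _) <;> simp
  exists_mem o ho := by
    by_cases hoa : o < a
    · exact ⟨false, by simpa using hoa⟩
    · exact ⟨true, by simpa using ⟨not_lt.1 hoa, ho⟩⟩

theorem OrdEquiv.add {n : ℕ} {a a' b b' : Ordinal.{u}} (ha : OrdEquiv n a a')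
    (hb : OrdEquiv n b b') : OrdEquiv n (a + b) (a' + b') :=
  of_isOrderedSum (isOrderedSum_add a b) (isOrderedSum_add a' b') fun i => by
    cases i
    exacts [ha, hb]

theorem isOrderedSum_const_one (κ : Ordinal.{u}) :
    IsOrderedSum (fun i : Iio κ => i.1) (fun _ => 1) κ where
  add_le_of_lt _ _ h := Order.add_one_le_of_lt h
  add_le i := Order.add_one_le_of_lt i.2
  exists_mem o ho := ⟨⟨o, ho⟩, le_rfl, lt_add_one o⟩

theorem isOrderedSum_iSup {ι : Type*} [LinearOrder ι] [WellFoundedLT ι] [Small.{u} ι]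
    {h d : ι → Ordinal.{u}} (hd : ∀ i, (⨆ j : Iio i, h j) + d i = h i) :
    IsOrderedSum (fun i => ⨆ j : Iio i, h j) d (⨆ i, h i) where
  add_le_of_lt i j hij := (hd i).trans_le (Ordinal.le_iSup (fun k : Iio j => h k) ⟨i, hij⟩)
  add_le i := (hd i).trans_le (Ordinal.le_iSup h i)
  exists_mem o ho := by
    obtain ⟨i, hi, hmin⟩ := wellFounded_lt.has_min {i | o < h i} (Ordinal.lt_iSup_iff.1 ho)
    exact ⟨i, Ordinal.iSup_le fun j => not_lt.1 fun hj => hmin j hj j.2, (hd i).symm ▸ hi⟩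

theorem exists_isOrderedSum_of_isSuccLimit {γ : Ordinal.{u}} (hγ : Order.IsSuccLimit γ) :
    ∃ G d : Iio γ.cof.ord → Ordinal.{u}, IsOrderedSum G d γ ∧ ∀ i, d i < γ ∧ (d i).cof = 1 := by
  obtain ⟨f, hf⟩ := exists_isFundamentalSeq (o := γ) rfl
  set G := fun i => ⨆ j : Iio i, (f j.1 : Ordinal.{u}) + 1
  have hGf : ∀ i, G i ≤ f i := fun i => Ordinal.iSup_le fun j =>
    Order.add_one_le_of_lt (show (f j : Ordinal) < f i from hf.strictMono j.2)
  have hsum := isOrderedSum_iSup (h := fun i => (f i : Ordinal) + 1)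
      (d := fun i => (f i - G i) + 1) fun i => by
    rw [← add_assoc, Ordinal.add_sub_cancel_of_le (hGf i)]
  rw [hf.iSup_add_one_eq] at hsum
  exact ⟨G, _, hsum, fun i => ⟨hγ.add_one_lt ((Ordinal.sub_le_self _ _).trans_lt (f i).2),
    cof_add_one _⟩⟩

section Induction

variable {n : ℕ} {c : Cardinal.{u}} {P L r : Ordinal.{u}}

theorem ordEquiv_mul_add_self (hPL : OrdEquiv n P (P * L)) (hrL : r + L = L) :
    OrdEquiv n (P * r + P) P := by
  have h := (OrdEquiv.refl n (P * r)).add hPL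
  rw [← mul_add, hrL] at h
  exact h.trans hPL.symm

theorem ordEquiv_mul_ord_cof (hPL : OrdEquiv n P (P * L)) (hL : ∀ r ≤ c.ord, r + L = L) :
    ∀ γ : Ordinal.{u}, γ.card ≤ c → OrdEquiv n (P * γ) (P * γ.cof.ord) := by
  intro γ
  induction γ using WellFoundedLT.induction with | _ γ ih => ?_
  intro hγ
  rcases zero_or_succ_or_isSuccLimit γ with rfl | ⟨γ, rfl⟩ | hlim
  · simpa using OrdEquiv.refl n 0
  · rw [Order.succ_eq_add_one, cof_add_one, Cardinal.ord_one, mul_one, mul_add_one]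
    have hγc : γ.card ≤ c := (card_le_card (Order.le_succ γ)).trans hγ
    exact ((ih γ (Order.lt_succ γ) hγc).add (.refl n P)).trans
      (ordEquiv_mul_add_self hPL (hL _ (Cardinal.ord_le_ord.2 ((cof_le_card γ).trans hγc))))
  · obtain ⟨G, d, hsum, hd⟩ := exists_isOrderedSum_of_isSuccLimit hlim
    refine .of_isOrderedSum (hsum.mul_left P) ((isOrderedSum_const_one _).mul_left P) fun i => ?_
    have hi := ih (d i) (hd i).1 ((card_le_card (hd i).1.le).trans hγ)
    rwa [(hd i).2, Cardinal.ord_one] at hi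

theorem ordEquiv_mul_ord_cof_mul (hPL : OrdEquiv n P (P * L)) (hL : ∀ r ≤ c.ord, r + L = L)
    (hP : P ≠ 0) (hLc : L.card ≤ c) (hcof : L.cof = P.cof) {γ : Ordinal.{u}} (hγ : γ.card ≤ c) :
    OrdEquiv n (P * γ) (P * (P * γ).cof.ord) := by
  have key := ordEquiv_mul_ord_cof hPL hL
  rcases zero_or_succ_or_isSuccLimit γ with rfl | ⟨γ, rfl⟩ | hlim
  · simpa using OrdEquiv.refl n 0
  · have h := key _ hγ
    rw [Order.succ_eq_add_one, cof_add_one, Cardinal.ord_one, mul_one, mul_add_one] at h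
    rw [Order.succ_eq_add_one, mul_add_one, cof_add _ hP, ← hcof]
    exact h.trans (hPL.trans (key L hLc))
  · rw [cof_mul hP hlim.isSuccPrelimit]
    exact key γ hγ

end Induction

section Powers

open Cardinal

variable {c : Cardinal.{u}}

theorem one_lt_ord (hc : ℵ₀ ≤ c) : 1 < c.ord :=
  one_lt_omega0.trans_le (omega0_le_ord.2 hc)

theorem add_ord_opow_eq (hc : ℵ₀ ≤ c) {r : Ordinal.{u}} (hr : r ≤ c.ord) {D : ℕ} (hD : 2 ≤ D) :
    r + c.ord ^ (D : Ordinal) = c.ord ^ (D : Ordinal) := by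
  refine (isPrincipal_add_opow_of_isPrincipal_add (isPrincipal_add_ord hc) _).add_eq_right
    (hr.trans_lt ?_)
  calc c.ord = c.ord ^ (1 : Ordinal) := (opow_one _).symm
    _ < c.ord ^ (D : Ordinal) := (opow_lt_opow_iff_right (one_lt_ord hc)).2 (by exact_mod_cast hD)

theorem card_ord_opow_le (hc : ℵ₀ ≤ c) (m : ℕ) : (c.ord ^ (m : Ordinal)).card ≤ c :=
  (card_opow_le_of_omega0_le_left (omega0_le_ord.2 hc) _).trans <|
    max_le (card_ord c).le ((card_nat m).trans_le (natCast_lt_aleph0.le.trans hc))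

theorem cof_ord_opow (hc : ℵ₀ ≤ c) {m : ℕ} (hm : m ≠ 0) :
    (c.ord ^ (m : Ordinal)).cof = c.ord.cof := by
  obtain ⟨k, rfl⟩ := Nat.exists_eq_succ_of_ne_zero hm
  rw [Nat.cast_succ, opow_add_one]
  exact cof_mul (opow_ne_zero _ (one_lt_ord hc).ne_bot) (isSuccLimit_ord hc).isSuccPrelimit

theorem card_le_of_lt_ord_succ {a : Ordinal.{u}} (ha : a < (Order.succ c).ord) : a.card ≤ c :=
  Order.lt_succ_iff.1 (lt_ord.1 ha)

theorem exists_ordEquiv_opow_mul_opow (n : ℕ) :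
    ∃ Q D : ℕ, Q ≠ 0 ∧ 2 ≤ D ∧
      OrdEquiv n (c.ord ^ (Q : Ordinal)) (c.ord ^ (Q : Ordinal) * c.ord ^ (D : Ordinal)) := by
  obtain ⟨x, y, hxy, hth⟩ := Set.finite_univ.exists_lt_map_eq_of_forall_mem
    (f := fun m : ℕ => theory n (![] : Fin 0 → Set (Iio (c.ord ^ ((2 * m + 1 : ℕ) : Ordinal)))))
    fun _ => Set.mem_univ _
  refine ⟨2 * x + 1, 2 * (y - x), by omega, by omega, ?_⟩
  rw [← opow_add, ← Nat.cast_add, show 2 * x + 1 + 2 * (y - x) = 2 * y + 1 by omega]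
  exact theory_eq_iff.1 hth

theorem ordEquiv_of_dvd_of_cof_eq (hc : ℵ₀ ≤ c) {n Q D : ℕ} (hQ : Q ≠ 0) (hD : 2 ≤ D)
    (hbase : OrdEquiv n (c.ord ^ (Q : Ordinal)) (c.ord ^ (Q : Ordinal) * c.ord ^ (D : Ordinal)))
    {a b : Ordinal.{u}} (ha : a < (Order.succ c).ord) (hb : b < (Order.succ c).ord)
    (hda : c.ord ^ (Q : Ordinal) ∣ a) (hdb : c.ord ^ (Q : Ordinal) ∣ b) (hab : a.cof = b.cof) :
    OrdEquiv n a b := by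
  set P := c.ord ^ (Q : Ordinal)
  have hP : P ≠ 0 := opow_ne_zero _ (one_lt_ord hc).ne_bot
  have key : ∀ γ, P * γ < (Order.succ c).ord → OrdEquiv n (P * γ) (P * (P * γ).cof.ord) :=
    fun γ hγ => ordEquiv_mul_ord_cof_mul hbase (fun r hr => add_ord_opow_eq hc hr hD) hP
      (card_ord_opow_le hc D) (by rw [cof_ord_opow hc (by omega), cof_ord_opow hc hQ])
      (card_le_of_lt_ord_succ ((le_mul_right γ (pos_iff_ne_zero.2 hP)).trans_lt hγ))
  obtain ⟨γ, rfl⟩ := hda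
  obtain ⟨δ, rfl⟩ := hdb
  have hγ := key γ ha
  rw [hab] at hγ
  exact hγ.trans (key δ hb).symm

end Powers

end MSO

/-- (Shelah, proof of Thm 3.5(B), claim (*).) For every `n` there is `q < ω` such that
any two ordinals `α, β < λ⁺` divisible by `λ^q` and of equal cofinality satisfy the
same monadic sentences of quantifier depth `≤ n`. -/
theorem exists_q_divisible_same_cofinality_equiv
    (lam : Cardinal) (hlam : Cardinal.aleph0 ≤ lam) (n : ℕ) :
    ∃ q : ℕ, ∀ α β : Ordinal,
      α < (Order.succ lam).ord → β < (Order.succ lam).ord →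
      (lam.ord ^ (q : Ordinal)) ∣ α → (lam.ord ^ (q : Ordinal)) ∣ β →
      α.cof = β.cof →
      ∀ φ : MSO 0 0 0, φ.depth ≤ n →
        (MSO.SatS (α := ↥(Set.Iio α)) (fun p => p.elim0) φ ↔
         MSO.SatS (α := ↥(Set.Iio β)) (fun p => p.elim0) φ) := by
  obtain ⟨Q, D, hQ, hD, hbase⟩ := MSO.exists_ordEquiv_opow_mul_opow (c := lam) (n + 1)
  exact ⟨Q, fun α β hα hβ hdα hdβ hcof φ hφ =>
    (MSO.ordEquiv_of_dvd_of_cof_eq hlam hQ hD hbase hα hβ hdα hdβ hcof).satS_iff hφ⟩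
end

section
/- Let λ be a regular uncountable cardinal and suppose there is a monadic sentence ψ such that for all ordinals α, α ⊨ ψ iff α = λ. Then λ^(ω+1) (ordinal exponentiation) is the least ordinal satisfying the monadic theory consisting of: 'cf(α) = λ' together with, for each n < ω, 'λⁿ divides α'. That is, any ordinal α satisfying all these properties satisfies α ≥ λ^(ω+1). -/
open Ordinal Order
open scoped Cardinal

namespace Ordinal

theorem opow_omega0_dvd_of_forall_opow_natCast_dvd {b a : Ordinal} (hb : b ≠ 0)
    (h : ∀ n : ℕ, b ^ (n : Ordinal) ∣ a) : b ^ ω ∣ a := by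
  rw [dvd_iff_mod_eq_zero]
  by_contra hne
  obtain ⟨c, hcω, hlt⟩ := (lt_opow_of_isSuccLimit hb isSuccLimit_omega0).1
    (mod_lt a (opow_pos ω (pos_iff_ne_zero.2 hb)).ne')
  obtain ⟨n, rfl⟩ := lt_omega0.1 hcω
  have hdvd : b ^ (n : Ordinal) ∣ a % b ^ ω := by
    rw [dvd_iff_mod_eq_zero, mod_mod_of_dvd a (opow_dvd_opow b (natCast_lt_omega0 n).le),
      ← dvd_iff_mod_eq_zero]
    exact h n
  exact (le_of_dvd hne hdvd).not_gt hlt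

theorem cof_opow_omega0 {b : Ordinal} (hb : 1 < b) : (b ^ ω).cof = ℵ₀ := by
  rw [cof_map_of_isNormal (isNormal_opow hb) isSuccLimit_omega0, cof_omega0]

theorem cof_opow_omega0_mul_succ {b : Ordinal} (hb : 1 < b) (γ : Ordinal) :
    (b ^ ω * succ γ).cof = ℵ₀ := by
  rw [mul_succ, cof_add _ (opow_pos ω (zero_lt_one.trans hb)).ne', cof_opow_omega0 hb]

theorem cof_opow_omega0_mul_of_isSuccLimit {b β : Ordinal} (hb : b ≠ 0) (hβ : IsSuccLimit β) :
    (b ^ ω * β).cof = β.cof :=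
  cof_map_of_isNormal (isNormal_mul_right (opow_pos ω (pos_iff_ne_zero.2 hb))) hβ

end Ordinal

theorem opow_omega0_succ_least_model_general
    (lam : Cardinal) (hreg : lam.IsRegular) (hunc : Cardinal.aleph0 < lam) :
    ((lam.ord ^ (Ordinal.omega0 + 1)).cof = lam ∧
      ∀ n : ℕ, (lam.ord ^ (n : Ordinal)) ∣ lam.ord ^ (Ordinal.omega0 + 1)) ∧
    (∀ α : Ordinal, α.cof = lam → (∀ n : ℕ, (lam.ord ^ (n : Ordinal)) ∣ α) →
      lam.ord ^ (Ordinal.omega0 + 1) ≤ α) := by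
  have h1 : 1 < lam.ord := by
    simpa using Cardinal.ord_lt_ord.2 ((Cardinal.one_lt_aleph0).trans hunc)
  have h0 : lam.ord ≠ 0 := (zero_lt_one.trans h1).ne'
  refine ⟨⟨?_, fun n => opow_dvd_opow _ ((natCast_lt_omega0 n).le.trans le_self_add)⟩, ?_⟩
  · rw [opow_add_one,
      cof_opow_omega0_mul_of_isSuccLimit h0 (Cardinal.isSuccLimit_ord hreg.aleph0_le), hreg.cof_ord]
  intro α hcof hdvd
  obtain ⟨β, rfl⟩ := opow_omega0_dvd_of_forall_opow_natCast_dvd h0 hdvd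
  rcases zero_or_succ_or_isSuccLimit β with rfl | ⟨γ, rfl⟩ | hβ
  · rw [mul_zero, cof_zero] at hcof
    exact absurd hcof.symm hreg.pos.ne'
  · rw [cof_opow_omega0_mul_succ h1] at hcof
    exact absurd hcof.symm hunc.ne'
  · rw [cof_opow_omega0_mul_of_isSuccLimit h0 hβ] at hcof
    rw [opow_add_one]
    exact mul_le_mul_right (hcof ▸ ord_cof_le β) _

/-- (Shelah, Thm 3.5(D).) Let `λ` be a regular uncountable cardinal characterizable by a
monadic sentence. Then `λ^(ω+1)` is the least ordinal of cofinality `λ` divisible by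
every `λⁿ` (`n < ω`). -/
theorem opow_omega0_succ_least_model
    (lam : Cardinal) (hreg : lam.IsRegular) (hunc : Cardinal.aleph0 < lam)
    (hψ : ∃ ψ : MSO 0 0 0, ∀ α : Ordinal,
      MSO.SatS (α := ↥(Set.Iio α)) (fun p => p.elim0) ψ ↔ α = lam.ord) :
    ((lam.ord ^ (Ordinal.omega0 + 1)).cof = lam ∧
      ∀ n : ℕ, (lam.ord ^ (n : Ordinal)) ∣ lam.ord ^ (Ordinal.omega0 + 1)) ∧
    (∀ α : Ordinal, α.cof = lam → (∀ n : ℕ, (lam.ord ^ (n : Ordinal)) ∣ α) →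
      lam.ord ^ (Ordinal.omega0 + 1) ≤ α) :=
  opow_omega0_succ_least_model_general lam hreg hunc
end

section
/- If an ordinal α has cf(α) = ω₁ (or more generally cofinality > ω) and α is a limit of limits, and λⁿ divides α for every n < ω where λ is any fixed ordinal ≥ 2, then λ^ω divides α. -/
/-! The remainder of `α` modulo `λ^ω` lies below some `λⁿ`, since `λ^ω = sup λⁿ`; it is also
divisible by `λⁿ`, because both `α` and `λ^ω` are. Hence the remainder is `0`. -/

namespace Ordinal

theorem dvd_mod_of_dvd {a b c : Ordinal} (ha : c ∣ a) (hb : c ∣ b) : c ∣ a % b := by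
  rwa [← dvd_add_iff (hb.mul_right _), div_add_mod]

theorem opow_dvd_of_isSuccLimit {a b α : Ordinal} (hb : Order.IsSuccLimit b)
    (h : ∀ c < b, a ^ c ∣ α) : a ^ b ∣ α := by
  obtain rfl | ha := eq_or_ne a 0
  · have h1 := h 1 (one_lt_of_isSuccLimit hb)
    rw [opow_one, zero_dvd_iff] at h1
    simp [h1]
  rw [dvd_iff_mod_eq_zero]
  by_contra hr
  obtain ⟨c, hcb, hlt⟩ := (lt_opow_of_isSuccLimit ha hb).1 (mod_lt α (opow_ne_zero b ha))
  have hdvd : a ^ c ∣ α % a ^ b := dvd_mod_of_dvd (h c hcb) (opow_dvd_opow a hcb.le)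
  exact (le_of_dvd hr hdvd).not_gt hlt

end Ordinal

theorem opow_omega0_dvd_of_forall_opow_nat_dvd_general
    (α : Ordinal)
    (lam : Ordinal)
    (hdvd : ∀ n : ℕ, (lam ^ (n : Ordinal)) ∣ α) :
    (lam ^ Ordinal.omega0) ∣ α :=
  Ordinal.opow_dvd_of_isSuccLimit Ordinal.isSuccLimit_omega0 fun c hc => by
    obtain ⟨n, rfl⟩ := Ordinal.lt_omega0.1 hc
    exact hdvd n

/-- (Shelah, proof of Thm 3.5(D).) If an ordinal `α` has uncountable cofinality,
is a limit of limit ordinals, and is divisible by `λⁿ` for every `n < ω`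
(where `λ ≥ 2`), then `α` is divisible by `λ^ω`. -/
theorem opow_omega0_dvd_of_forall_opow_nat_dvd
    (α : Ordinal) (hcof : Cardinal.aleph0 < α.cof)
    (hll : ∀ β < α, ∃ γ : Ordinal, β < γ ∧ γ < α ∧ Order.IsSuccLimit γ)
    (lam : Ordinal) (hlam : 2 ≤ lam)
    (hdvd : ∀ n : ℕ, (lam ^ (n : Ordinal)) ∣ α) :
    (lam ^ Ordinal.omega0) ∣ α :=
  opow_omega0_dvd_of_forall_opow_nat_dvd_general α lam hdvd
end

section
/- Let α be an ordinal with cf(α) > ω, and let P₁,…,Pₘ be subsets of α. Then there is a closed unbounded set J ⊆ α such that for each β < α, all structures (α, <, P₁,…,Pₘ) restricted to the interval [β, γ), for γ ∈ J with cf(γ) = ω and γ > β, satisfy the same monadic second-order sentences. -/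
open Set

def Hintikka : ℕ → ℕ → Type
  | 0, m => (Fin m → Fin m → Prop) × (Fin m → Fin m → Prop)
  | n + 1, m => Hintikka n m × Hintikka n (m + 1) × Set (Hintikka n (m + 1)) ×
      Set (Hintikka n (m + 1))

instance Hintikka.finite : ∀ n m, Finite (Hintikka n m)
  | 0, _ => by unfold Hintikka; infer_instance
  | n + 1, m => by
    have := Hintikka.finite n m
    have := Hintikka.finite n (m + 1)
    unfold Hintikka; infer_instance

/-- Elements are coded as singleton predicates. The component for the expansion by `∅` is what
the composition theorem needs for the fibers that miss a chosen element. -/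
def hintikka {α : Type*} [LinearOrder α] :
    (n : ℕ) → {m : ℕ} → (Fin m → Set α) → Hintikka n m
  | 0, _, P => (fun i j => ∃ x ∈ P i, ∃ y ∈ P j, x < y, fun i j => (P i ∩ P j).Nonempty)
  | n + 1, _, P => (hintikka n P, hintikka n (Fin.snoc P ∅),
      range fun a => hintikka n (Fin.snoc P {a}), range fun A => hintikka n (Fin.snoc P A))

def Hintikka.toZero : {n m : ℕ} → Hintikka n m → Hintikka 0 m
  | 0, _, t => t
  | _ + 1, _, t => t.1.toZero

theorem hintikka_toZero {α : Type*} [LinearOrder α] :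
    ∀ (n : ℕ) {m : ℕ} (P : Fin m → Set α), (hintikka n P).toZero = hintikka 0 P
  | 0, _, _ => rfl
  | n + 1, _, P => hintikka_toZero n P

theorem hintikka_zero_eq_of_eq {α β : Type*} [LinearOrder α] [LinearOrder β] {n m : ℕ}
    {P : Fin m → Set α} {Q : Fin m → Set β} (h : hintikka n P = hintikka n Q) :
    hintikka 0 P = hintikka 0 Q := by
  rw [← hintikka_toZero n, h, hintikka_toZero]

def comapPreds {α β : Type*} (w : β → α) {m : ℕ} (P : Fin m → Set α) : Fin m → Set β :=
  fun p => w ⁻¹' P p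

theorem comapPreds_snoc {α β : Type*} (w : β → α) {m : ℕ} (P : Fin m → Set α) (A : Set α) :
    comapPreds w (Fin.snoc P A) = Fin.snoc (comapPreds w P) (w ⁻¹' A) := by
  funext p
  refine Fin.lastCases ?_ (fun i => ?_) p <;> simp [comapPreds]

theorem exists_congr_of_range_eq {α β : Sort*} {γ : Type*} {F : α → γ} {G : β → γ}
    (h : range F = range G) {p : α → Prop} {q : β → Prop}
    (hpq : ∀ a b, F a = G b → (p a ↔ q b)) : (∃ a, p a) ↔ (∃ b, q b) := by
  constructor
  · rintro ⟨a, ha⟩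
    obtain ⟨b, hb⟩ : F a ∈ range G := h ▸ mem_range_self a
    exact ⟨b, (hpq a b hb.symm).1 ha⟩
  · rintro ⟨b, hb⟩
    obtain ⟨a, ha⟩ : G b ∈ range F := h.symm ▸ mem_range_self b
    exact ⟨a, (hpq a b ha).2 hb⟩

theorem OrderIso.hintikka_comapPreds {α β : Type*} [LinearOrder α] [LinearOrder β]
    (e : α ≃o β) : ∀ (n : ℕ) {m : ℕ} (Q : Fin m → Set β), hintikka n (comapPreds e Q) = hintikka n Q
  | 0, _, Q => by
    refine Prod.ext (funext₂ fun i j => propext ?_) (funext₂ fun i j => propext ?_)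
    · simp only [hintikka, comapPreds, mem_preimage, ← e.lt_iff_lt]
      exact ⟨fun ⟨x, hx, y, hy, hxy⟩ => ⟨e x, hx, e y, hy, hxy⟩,
        fun ⟨x, hx, y, hy, hxy⟩ => ⟨e.symm x, by simpa, e.symm y, by simpa, by simpa⟩⟩
    · simp only [hintikka, comapPreds]
      rw [← preimage_inter, e.surjective.nonempty_preimage]
  | n + 1, m, Q => by
    have ih : ∀ {m} (Q : Fin m → Set β), hintikka n (comapPreds e Q) = hintikka n Q :=
      fun Q => e.hintikka_comapPreds n Q
    refine Prod.ext (ih Q) (Prod.ext ?_ (Prod.ext ?_ ?_))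
    · simpa [hintikka, comapPreds_snoc] using ih (Fin.snoc Q ∅)
    · change range (fun a => _) = range (fun b => _)
      rw [← e.surjective.range_comp]
      congr! 2 with a
      simp only [Function.comp_apply, ← ih, comapPreds_snoc, ← image_singleton, e.preimage_image]
    · change range (fun a => _) = range (fun b => _)
      rw [← (e.injective.preimage_surjective).range_comp]
      congr! 2 with B
      simp only [Function.comp_apply, ← ih, comapPreds_snoc]

/-- Assignments of free variables are coded as extra predicates, elements as singletons. -/
structure Encodes {α : Type*} {r m k l : ℕ} (R : Fin r → Set α) (ip : Fin m → Fin r)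
    (ie : Fin k → Fin r) (is : Fin l → Fin r) (P : Fin m → Set α) (e : Fin k → α)
    (s : Fin l → Set α) : Prop where
  preds : ∀ p, R (ip p) = P p
  elems : ∀ i, R (ie i) = {e i}
  sets : ∀ X, R (is X) = s X

namespace Encodes

variable {α : Type*} {r m k l : ℕ} {R : Fin r → Set α} {ip : Fin m → Fin r}
  {ie : Fin k → Fin r} {is : Fin l → Fin r} {P : Fin m → Set α} {e : Fin k → α}
  {s : Fin l → Set α}

theorem snoc_singleton (h : Encodes R ip ie is P e s) (a : α) :
    Encodes (Fin.snoc R {a}) (Fin.castSucc ∘ ip) (Fin.cons (Fin.last r) (Fin.castSucc ∘ ie))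
      (Fin.castSucc ∘ is) P (Fin.cons a e) s where
  preds p := by simp [h.preds]
  elems i := by refine Fin.cases ?_ (fun i => ?_) i <;> simp [h.elems]
  sets X := by simp [h.sets]

theorem snoc_set (h : Encodes R ip ie is P e s) (A : Set α) :
    Encodes (Fin.snoc R A) (Fin.castSucc ∘ ip) (Fin.castSucc ∘ ie)
      (Fin.cons (Fin.last r) (Fin.castSucc ∘ is)) P e (Fin.cons A s) where
  preds p := by simp [h.preds]
  elems i := by simp [h.elems]
  sets X := by refine Fin.cases ?_ (fun X => ?_) X <;> simp [h.sets]

end Encodes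

theorem MSO.sat_iff_of_hintikka_eq {m : ℕ} {k l : ℕ} (φ : MSO m k l) {n : ℕ} (hφ : φ.depth ≤ n)
    {α β : Type*} [LinearOrder α] [LinearOrder β] {r : ℕ} {R : Fin r → Set α}
    {R' : Fin r → Set β} (h : hintikka n R = hintikka n R') {ip : Fin m → Fin r}
    {ie : Fin k → Fin r} {is : Fin l → Fin r} {P : Fin m → Set α} {e : Fin k → α}
    {s : Fin l → Set α} {Q : Fin m → Set β} {e' : Fin k → β} {s' : Fin l → Set β}
    (hR : Encodes R ip ie is P e s) (hR' : Encodes R' ip ie is Q e' s') :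
    φ.Sat P e s ↔ φ.Sat Q e' s' := by
  induction φ generalizing n r with
  | lt i j =>
    have := congrArg (fun t => t.1 (ie i) (ie j)) (hintikka_zero_eq_of_eq h)
    simpa [hintikka, hR.elems, hR'.elems, MSO.Sat] using this
  | eq i j =>
    have := congrArg (fun t => t.2 (ie i) (ie j)) (hintikka_zero_eq_of_eq h)
    simpa [hintikka, hR.elems, hR'.elems, MSO.Sat, eq_comm] using this
  | mem i X =>
    have := congrArg (fun t => t.2 (ie i) (is X)) (hintikka_zero_eq_of_eq h)
    simpa [hintikka, hR.elems, hR'.elems, hR.sets, hR'.sets, MSO.Sat] using this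
  | pred p i =>
    have := congrArg (fun t => t.2 (ip p) (ie i)) (hintikka_zero_eq_of_eq h)
    simpa [hintikka, hR.elems, hR'.elems, hR.preds, hR'.preds, MSO.Sat] using this
  | not φ ih => exact not_congr (ih hφ h hR hR')
  | and φ ψ ihφ ihψ =>
    exact and_congr (ihφ (le_of_max_le_left hφ) h hR hR')
      (ihψ (le_of_max_le_right hφ) h hR hR')
  | exElem φ ih =>
    obtain ⟨n, rfl⟩ := Nat.exists_eq_add_of_lt (Nat.lt_of_succ_le hφ)
    exact exists_congr_of_range_eq (congrArg (fun t => t.2.2.1) h) fun a b hab =>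
      ih (by simp only [MSO.depth] at hφ; omega) hab (hR.snoc_singleton a) (hR'.snoc_singleton b)
  | exSet φ ih =>
    obtain ⟨n, rfl⟩ := Nat.exists_eq_add_of_lt (Nat.lt_of_succ_le hφ)
    exact exists_congr_of_range_eq (congrArg (fun t => t.2.2.2) h) fun A B hAB =>
      ih (by simp only [MSO.depth] at hφ; omega) hAB (hR.snoc_set A) (hR'.snoc_set B)

theorem MSO.satS_iff_of_hintikka_eq {m : ℕ} (φ : MSO m 0 0) {α β : Type*} [LinearOrder α]
    [LinearOrder β] {P : Fin m → Set α} {Q : Fin m → Set β}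
    (h : hintikka φ.depth P = hintikka φ.depth Q) : φ.SatS P ↔ φ.SatS Q :=
  φ.sat_iff_of_hintikka_eq le_rfl h (ip := id) (ie := Fin.elim0) (is := Fin.elim0)
    ⟨fun _ => rfl, (·.elim0), (·.elim0)⟩ ⟨fun _ => rfl, (·.elim0), (·.elim0)⟩

abbrev restrictPreds {α : Type*} (S : Set α) {m : ℕ} (P : Fin m → Set α) : Fin m → Set S :=
  comapPreds (↑) P

section Composition

variable {ι α β : Type*} [LinearOrder α] [LinearOrder β] {f : α → ι}
  {g : β → ι} {m : ℕ} {P : Fin m → Set α} {Q : Fin m → Set β}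

theorem exists_mem_fiber_of_mem
    (h : ∀ i, hintikka 0 (restrictPreds (f ⁻¹' {i}) P) = hintikka 0 (restrictPreds (g ⁻¹' {i}) Q))
    {p q : Fin m} {x : α} (hp : x ∈ P p) (hq : x ∈ P q) : ∃ y ∈ Q p, y ∈ Q q ∧ g y = f x := by
  have := congrArg (fun t => t.2 p q) (h (f x))
  simp only [hintikka, eq_iff_iff] at this
  obtain ⟨⟨y, hy⟩, hyp, hyq⟩ := this.1 ⟨⟨x, rfl⟩, hp, hq⟩
  exact ⟨y, hyp, hyq, hy⟩

theorem exists_lt_of_hintikka_fiber_zero [LinearOrder ι] (hf : Monotone f) (hg : Monotone g)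
    (h : ∀ i, hintikka 0 (restrictPreds (f ⁻¹' {i}) P) = hintikka 0 (restrictPreds (g ⁻¹' {i}) Q))
    {p q : Fin m} (hPpq : ∃ x ∈ P p, ∃ y ∈ P q, x < y) : ∃ x ∈ Q p, ∃ y ∈ Q q, x < y := by
  obtain ⟨x, hx, y, hy, hxy⟩ := hPpq
  rcases (hf hxy.le).eq_or_lt with hfxy | hfxy
  · have := congrArg (fun t => t.1 p q) (h (f x))
    simp only [hintikka, eq_iff_iff] at this
    obtain ⟨u, hu, v, hv, huv⟩ := this.1 ⟨⟨x, rfl⟩, hx, ⟨y, hfxy.symm⟩, hy, hxy⟩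
    exact ⟨u, hu, v, hv, huv⟩
  · obtain ⟨u, hu, -, hgu⟩ := exists_mem_fiber_of_mem h hx hx
    obtain ⟨v, hv, -, hgv⟩ := exists_mem_fiber_of_mem h hy hy
    exact ⟨u, hu, v, hv, hg.reflect_lt (hgu ▸ hgv ▸ hfxy)⟩

theorem hintikka_zero_eq_of_fibers [LinearOrder ι] (hf : Monotone f) (hg : Monotone g)
    (h : ∀ i, hintikka 0 (restrictPreds (f ⁻¹' {i}) P) = hintikka 0 (restrictPreds (g ⁻¹' {i}) Q)) :
    hintikka 0 P = hintikka 0 Q := by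
  have h' i := (h i).symm
  refine Prod.ext (funext₂ fun p q => propext ?_) (funext₂ fun p q => propext ?_)
  · exact ⟨exists_lt_of_hintikka_fiber_zero hf hg h, exists_lt_of_hintikka_fiber_zero hg hf h'⟩
  · constructor
    · rintro ⟨x, hp, hq⟩
      obtain ⟨y, hyp, hyq, -⟩ := exists_mem_fiber_of_mem h hp hq
      exact ⟨y, hyp, hyq⟩
    · rintro ⟨x, hp, hq⟩
      obtain ⟨y, hyp, hyq, -⟩ := exists_mem_fiber_of_mem h' hp hq
      exact ⟨y, hyp, hyq⟩

theorem exists_fiberwise_snoc_singleton {n : ℕ} (h : ∀ i, hintikka (n + 1)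
      (restrictPreds (f ⁻¹' {i}) P) = hintikka (n + 1) (restrictPreds (g ⁻¹' {i}) Q)) (a : α) :
    ∃ b, ∀ i, hintikka n (restrictPreds (f ⁻¹' {i}) (Fin.snoc P {a})) =
      hintikka n (restrictPreds (g ⁻¹' {i}) (Fin.snoc Q {b})) := by
  have hr : (range fun x => hintikka n (Fin.snoc (restrictPreds (f ⁻¹' {f a}) P) {x})) =
      range fun y => hintikka n (Fin.snoc (restrictPreds (g ⁻¹' {f a}) Q) {y}) :=
    congrArg (fun t => t.2.2.1) (h (f a))
  obtain ⟨⟨b, hb⟩, hab⟩ := hr ▸ mem_range_self (⟨a, rfl⟩ : f ⁻¹' {f a})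
  refine ⟨b, fun i => ?_⟩
  simp only [restrictPreds, comapPreds_snoc]
  obtain rfl | hi := eq_or_ne i (f a)
  · convert hab.symm using 4 <;> ext ⟨x, hx⟩ <;> simp [Subtype.ext_iff]
  · have hα : ((↑) : f ⁻¹' {i} → α) ⁻¹' {a} = ∅ := by
      ext ⟨x, hx : f x = i⟩
      simpa using fun hxa => hi (hxa ▸ hx).symm
    have hβ : ((↑) : g ⁻¹' {i} → β) ⁻¹' {b} = ∅ := by
      ext ⟨y, hy : g y = i⟩
      simpa using fun hyb => hi ((hyb ▸ hy).symm.trans hb)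
    rw [hα, hβ]
    exact congrArg (fun t => t.2.1) (h i)

theorem exists_fiberwise_snoc_set {n : ℕ} (h : ∀ i, hintikka (n + 1)
      (restrictPreds (f ⁻¹' {i}) P) = hintikka (n + 1) (restrictPreds (g ⁻¹' {i}) Q))
    (A : Set α) : ∃ B, ∀ i, hintikka n (restrictPreds (f ⁻¹' {i}) (Fin.snoc P A)) =
      hintikka n (restrictPreds (g ⁻¹' {i}) (Fin.snoc Q B)) := by
  have hX i : ∃ X, hintikka n (Fin.snoc (restrictPreds (f ⁻¹' {i}) P) ((↑) ⁻¹' A)) =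
      hintikka n (Fin.snoc (restrictPreds (g ⁻¹' {i}) Q) X) := by
    have hr : (range fun Y => hintikka n (Fin.snoc (restrictPreds (f ⁻¹' {i}) P) Y)) =
        range fun Y => hintikka n (Fin.snoc (restrictPreds (g ⁻¹' {i}) Q) Y) :=
      congrArg (fun t => t.2.2.2) (h i)
    obtain ⟨X, hX⟩ := hr ▸ mem_range_self (((↑) : f ⁻¹' {i} → α) ⁻¹' A)
    exact ⟨X, hX.symm⟩
  choose X hX using hX
  refine ⟨{b | ⟨b, rfl⟩ ∈ X (g b)}, fun i => ?_⟩
  have hB : ((↑) : g ⁻¹' {i} → β) ⁻¹' {b | ⟨b, rfl⟩ ∈ X (g b)} = X i := by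
    ext ⟨b, rfl⟩
    rfl
  simp only [restrictPreds, comapPreds_snoc, hB]
  exact hX i

theorem hintikka_eq_of_fibers [LinearOrder ι] (hf : Monotone f) (hg : Monotone g) (n : ℕ)
    (h : ∀ i, hintikka n (restrictPreds (f ⁻¹' {i}) P) = hintikka n (restrictPreds (g ⁻¹' {i}) Q)) :
    hintikka n P = hintikka n Q := by
  induction n generalizing m with
  | zero => exact hintikka_zero_eq_of_fibers hf hg h
  | succ n ih =>
    have h' i := (h i).symm
    refine Prod.ext (ih fun i => congrArg Prod.fst (h i)) (Prod.ext ?_ (Prod.ext ?_ ?_))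
    · refine ih fun i => ?_
      simpa only [hintikka, restrictPreds, comapPreds_snoc, preimage_empty] using
        congrArg (fun t => t.2.1) (h i)
    · refine Subset.antisymm (range_subset_iff.2 fun a => ?_) (range_subset_iff.2 fun b => ?_)
      · obtain ⟨b, hb⟩ := exists_fiberwise_snoc_singleton h a
        exact ⟨b, (ih hb).symm⟩
      · obtain ⟨a, ha⟩ := exists_fiberwise_snoc_singleton h' b
        exact ⟨a, ih fun i => (ha i).symm⟩
    · refine Subset.antisymm (range_subset_iff.2 fun A => ?_) (range_subset_iff.2 fun B => ?_)
      · obtain ⟨B, hB⟩ := exists_fiberwise_snoc_set h A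
        exact ⟨B, (ih hB).symm⟩
      · obtain ⟨A, hA⟩ := exists_fiberwise_snoc_set h' B
        exact ⟨A, ih fun i => (hA i).symm⟩

end Composition

def IsAdditive {α T : Type*} [Preorder α] (c : α → α → T) : Prop :=
  ∀ ⦃x y z x' y' z' : α⦄, x ≤ y → y ≤ z → x' ≤ y' → y' ≤ z' →
    c x y = c x' y' → c y z = c y' z' → c x z = c x' z'

section Intervals

variable {α : Type*} [LinearOrder α] {m : ℕ}

def intervalType (n : ℕ) (P : Fin m → Set α) (a b : α) : Hintikka n m :=
  hintikka n (restrictPreds (Ico a b) P)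

theorem hintikka_restrictPreds_restrictPreds {T U : Set α} {S : Set T} (hU : U ⊆ T)
    (hS : ∀ x : T, x ∈ S ↔ (x : α) ∈ U) (n : ℕ) (P : Fin m → Set α) :
    hintikka n (restrictPreds S (restrictPreds T P)) = hintikka n (restrictPreds U P) :=
  let e : S ≃o U :=
    { toFun x := ⟨x.1, (hS x).1 x.2⟩
      invFun y := ⟨⟨y, hU y.2⟩, (hS _).2 y.2⟩
      left_inv _ := rfl
      right_inv _ := rfl
      map_rel_iff' := Iff.rfl }
  e.hintikka_comapPreds n (restrictPreds U P)

theorem isAdditive_intervalType (n : ℕ) (P : Fin m → Set α) : IsAdditive (intervalType n P) := by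
  have split {x y z : α} (hxy : x ≤ y) (hyz : y ≤ z) (i : Bool) :
      hintikka n (restrictPreds ((fun w : Ico x z => decide (y ≤ (w : α))) ⁻¹' {i})
        (restrictPreds (Ico x z) P)) = cond i (intervalType n P y z) (intervalType n P x y) := by
    cases i
    · refine hintikka_restrictPreds_restrictPreds (Ico_subset_Ico_right hyz) (fun w => ?_) n P
      simp [w.2.1]
    · refine hintikka_restrictPreds_restrictPreds (Ico_subset_Ico_left hxy) (fun w => ?_) n P
      simp [w.2.2]
  have mono {x y z : α} : Monotone fun w : Ico x z => decide (y ≤ (w : α)) :=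
    fun w₁ w₂ h => by simpa [Bool.le_iff_imp] using fun h' => h'.trans h
  intro x y z x' y' z' hxy hyz hxy' hyz' h₁ h₂
  refine hintikka_eq_of_fibers (mono (y := y)) (mono (y := y')) n fun i => ?_
  rw [split hxy hyz, split hxy' hyz']
  cases i <;> assumption

theorem exists_monotone_blocks (n : ℕ) (P : Fin m → Set α) {β γ : α} {u : ℕ → α}
    (hu : Monotone u) (hβ : β ≤ u 0) (huγ : ∀ k, u k < γ) (hcof : ∀ x < γ, ∃ k, x < u k) :
    ∃ f : Ico β γ → ℕ, Monotone f ∧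
      hintikka n (restrictPreds (f ⁻¹' {0}) (restrictPreds (Ico β γ) P)) =
        intervalType n P β (u 0) ∧
      ∀ k, hintikka n (restrictPreds (f ⁻¹' {k + 1}) (restrictPreds (Ico β γ) P)) =
        intervalType n P (u k) (u (k + 1)) := by
  classical
  refine ⟨fun x => Nat.find (hcof x x.2.2), fun x y hxy => Nat.find_min' _ ?_, ?_, fun k => ?_⟩
  · exact (show (x : α) ≤ y from hxy).trans_lt (Nat.find_spec (hcof y y.2.2))
  · refine hintikka_restrictPreds_restrictPreds (Ico_subset_Ico_right (huγ 0).le) (fun x => ?_) n P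
    simp [x.2.1]
  · refine hintikka_restrictPreds_restrictPreds
      (Ico_subset_Ico (hβ.trans (hu k.zero_le)) (huγ _).le) (fun x => ?_) n P
    simp only [mem_preimage, mem_singleton_iff, Nat.find_eq_iff, mem_Ico, not_lt]
    exact ⟨fun h => ⟨h.2 k k.lt_succ_self, h.1⟩,
      fun h => ⟨h.2, fun j hj => (hu (Nat.le_of_lt_succ hj)).trans h.1⟩⟩

theorem intervalType_eq_of_seq (n : ℕ) (P : Fin m → Set α) {β γ β' γ' : α} {u v : ℕ → α}
    (hu : Monotone u) (hv : Monotone v) (hβ : β ≤ u 0) (hβ' : β' ≤ v 0)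
    (huγ : ∀ k, u k < γ) (hvγ : ∀ k, v k < γ')
    (hucof : ∀ x < γ, ∃ k, x < u k) (hvcof : ∀ x < γ', ∃ k, x < v k)
    (h0 : intervalType n P β (u 0) = intervalType n P β' (v 0))
    (hk : ∀ k, intervalType n P (u k) (u (k + 1)) = intervalType n P (v k) (v (k + 1))) :
    intervalType n P β γ = intervalType n P β' γ' := by
  obtain ⟨f, hf, hf0, hfk⟩ := exists_monotone_blocks n P hu hβ huγ hucof
  obtain ⟨g, hg, hg0, hgk⟩ := exists_monotone_blocks n P hv hβ' hvγ hvcof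
  refine hintikka_eq_of_fibers hf hg n fun k => ?_
  cases k with
  | zero => rw [hf0, hg0, h0]
  | succ k => rw [hfk, hgk, hk]

end Intervals

open Cardinal Ordinal Order

def CofinalBelow {α : Type*} [LT α] (S : Set α) (δ : α) : Prop :=
  ∀ y < δ, ∃ z ∈ S, y < z ∧ z < δ

def IsHomogeneous {α T : Type*} [LT α] (c : α → α → T) (E : Set α) : Prop :=
  ∀ x ∈ E, ∀ y ∈ E, ∀ x' ∈ E, ∀ y' ∈ E, x < y → x' < y' → c x y = c x' y'

theorem CofinalBelow.exists_cofinalBelow_inter_preimage {T : Type*} [Finite T]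
    {S : Set Ordinal} {κ : Ordinal} (hκ : 0 < κ) (hS : CofinalBelow S κ) (g : Ordinal → T) :
    ∃ t, CofinalBelow (S ∩ g ⁻¹' {t}) κ := by
  by_contra! h
  have hb t : ∃ b < κ, ∀ z ∈ S, g z = t → b < z → κ ≤ z := by
    simpa [CofinalBelow] using h t
  choose b hbκ hb using hb
  have := Fintype.ofFinite T
  obtain ⟨z, hzS, hBz, hzκ⟩ := hS (Finset.univ.sup b) ((Finset.sup_lt_iff hκ).2 fun t _ => hbκ t)
  exact (hb (g z) z hzS rfl ((Finset.le_sup (Finset.mem_univ _)).trans_lt hBz)).not_gt hzκ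

theorem exists_cofinalBelow_eventuallyEq {T : Type*} [Finite T] {κ : Ordinal}
    (hκ : IsSuccLimit κ) (c : Ordinal → Ordinal → T) :
    ∃ x₀, CofinalBelow {y | ∃ z < κ, x₀ ≤ z ∧ y ≤ z ∧ c x₀ z = c y z} κ := by
  by_contra! h
  have hbd x : ∃ b < κ, ∀ y, ∀ z < κ, x ≤ z → y ≤ z → c x z = c y z → b < y → κ ≤ y := by
    simpa [CofinalBelow] using h x
  choose bd hbdκ hbd using hbd
  set a : ℕ → Ordinal := fun k => (fun x => max x (bd x) + 1)^[k] 0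
  have ha_succ k : a (k + 1) = max (a k) (bd (a k)) + 1 := Function.iterate_succ_apply' ..
  have haκ k : a k < κ := by
    induction k with
    | zero => exact hκ.bot_lt
    | succ k ih => exact ha_succ k ▸ hκ.add_one_lt (max_lt ih (hbdκ _))
  have ha : StrictMono a :=
    strictMono_nat_of_lt_succ fun k => ha_succ k ▸ (le_max_left _ _).trans_lt (lt_add_one _)
  have := Fintype.ofFinite T
  obtain ⟨i, j, hij, hcij⟩ := Fintype.exists_ne_map_eq_of_card_lt
    (fun i : Fin (Fintype.card T + 1) => c (a i) (a (Fintype.card T + 1))) (by simp)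
  wlog hlt : i < j generalizing i j
  · exact this j i hij.symm hcij.symm (hij.lt_or_gt.resolve_left hlt)
  have hbd_lt : bd (a i) < a j :=
    ((le_max_right _ _).trans_lt (lt_add_one _)).trans_le
      (ha_succ i ▸ ha.monotone (Nat.succ_le_of_lt hlt))
  exact (hbd _ _ _ (haκ _) (ha.monotone (by omega)) (ha.monotone (by omega)) hcij hbd_lt).not_gt
    (haκ j)

theorem cofinalBelow_closurePoints {c : Cardinal} (hc : c.IsRegular) (hc' : c ≠ ℵ₀)
    {f : Ordinal → Ordinal} (hf : ∀ x < c.ord, f x < c.ord) :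
    CofinalBelow {δ | δ < c.ord ∧ ∀ x < δ, f x < δ} c.ord := by
  set g : Ordinal → Ordinal := fun b => ⨆ x : Iio b, (f x + 1)
  have hg b (hb : b < c.ord) : g b < c.ord := by
    refine lift_iSup_add_one_lt_of_lt_cof (f := fun x : Iio b => f x) ?_
      fun x => hf x (x.2.trans hb)
    rw [Cardinal.mk_Iio_ordinal, Cardinal.lift_lift, ← Ordinal.lift_cof, Cardinal.lift_lt,
      hc.cof_ord, ← Cardinal.lt_ord]
    exact hb
  have hfg {x b} (hxb : x < b) : f x < g b :=
    (lt_add_one _).trans_le (Ordinal.le_iSup (fun x : Iio b => f x + 1) ⟨x, hxb⟩)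
  intro y hy
  have hδ : nfp g (y + 1) < c.ord :=
    nfp_lt_ord_of_isRegular hc hc' hg ((isSuccLimit_ord hc.aleph0_le).add_one_lt hy)
  refine ⟨nfp g (y + 1), ⟨hδ, fun x hx => ?_⟩, (lt_add_one y).trans_le (le_nfp _ _), hδ⟩
  obtain ⟨k, hk⟩ := lt_nfp_iff.1 hx
  exact (hfg hk).trans_le (Function.iterate_succ_apply' g k _ ▸ iterate_le_nfp g _ (k + 1))

theorem exists_cofinalBelow_isHomogeneous_of_isRegular {T : Type*} [Finite T] {c : Cardinal}
    (hc : c.IsRegular) (hc' : c ≠ ℵ₀) {col : Ordinal → Ordinal → T} (hcol : IsAdditive col) :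
    ∃ E, CofinalBelow E c.ord ∧ IsHomogeneous col E := by
  obtain ⟨x₀, hx₀⟩ := exists_cofinalBelow_eventuallyEq (isSuccLimit_ord hc.aleph0_le) col
  have hpz y (hy : y < c.ord) :
      ∃ p z, y < p ∧ z < c.ord ∧ x₀ ≤ z ∧ p ≤ z ∧ col x₀ z = col p z := by
    obtain ⟨p, ⟨z, hz, hx₀z, hpz, hcol⟩, hyp, -⟩ := hx₀ y hy
    exact ⟨p, z, hyp, hz, hx₀z, hpz, hcol⟩
  choose! p z hyp hz hx₀z hpz hcolz using hpz
  have tail {y w} (hy : y < c.ord) (hw : z y ≤ w) : col (p y) w = col x₀ w :=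
    (hcol (hx₀z y hy) hw (hpz y hy) hw (hcolz y hy) rfl).symm
  obtain ⟨t, ht⟩ := (cofinalBelow_closurePoints hc hc' hz).exists_cofinalBelow_inter_preimage
    hc.ord_pos fun δ => (col δ (p δ), col x₀ δ)
  -- for closure points `x < y` we have `p x ≤ z x < y`, so `col x y` is glued from
  -- `col x (p x)` and `col (p x) y = col x₀ y`
  refine ⟨_, ht, ?_⟩
  rintro x ⟨⟨hx, -⟩, hxt⟩ y ⟨⟨-, hy⟩, hyt⟩ x' ⟨⟨hx', -⟩, hx't⟩ y' ⟨⟨-, hy'⟩, hy't⟩ hxy hxy'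
  simp only [mem_preimage, mem_singleton_iff, Prod.ext_iff] at hxt hyt hx't hy't
  refine hcol (hyp x hx).le ((hpz x hx).trans (hy x hxy).le) (hyp x' hx').le
    ((hpz x' hx').trans (hy' x' hxy').le) (hxt.1.trans hx't.1.symm) ?_
  rw [tail hx (hy x hxy).le, tail hx' (hy' x' hxy').le, hyt.2, hy't.2]

theorem exists_cofinalBelow_isHomogeneous {T : Type*} [Finite T] {A : Ordinal}
    (hA : ℵ₀ < A.cof) {col : Ordinal → Ordinal → T} (hcol : IsAdditive col) :
    ∃ E, CofinalBelow E A ∧ IsHomogeneous col E := by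
  obtain ⟨f, hf⟩ := exists_isFundamentalSeq (o := A) rfl
  set F : Ordinal → Ordinal := fun i => if h : i < A.cof.ord then f ⟨i, h⟩ else A
  have hF : Monotone F := by
    intro i j hij
    simp only [F]
    split_ifs with hi hj hj
    · exact hf.strictMono.monotone (show (⟨i, hi⟩ : Iio A.cof.ord) ≤ ⟨j, hj⟩ from hij)
    · exact (f _).2.le
    · exact absurd (hij.trans_lt hj) hi
    · exact le_rfl
  obtain ⟨E, hE, hEhom⟩ := exists_cofinalBelow_isHomogeneous_of_isRegular
    (isRegular_cof (one_lt_cof_iff.1 (one_lt_aleph0.trans hA))) hA.ne'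
    (col := fun i j => col (F i) (F j))
    fun _ _ _ _ _ _ h₁ h₂ h₁' h₂' => hcol (hF h₁) (hF h₂) (hF h₁') (hF h₂')
  refine ⟨F '' E, fun y hy => ?_, ?_⟩
  · obtain ⟨_, ⟨i, rfl⟩, hyi⟩ := hf.isCofinal_range ⟨y, hy⟩
    obtain ⟨j, hjE, hij, hj⟩ := hE i i.2
    have hFj : F j = f ⟨j, hj⟩ := dif_pos hj
    refine ⟨F j, mem_image_of_mem F hjE, ?_, hFj ▸ (f _).2⟩
    exact hFj ▸ (show y ≤ f i from hyi).trans_lt (hf.strictMono (show i < ⟨j, hj⟩ from hij))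
  · rintro _ ⟨x, hx, rfl⟩ _ ⟨y, hy, rfl⟩ _ ⟨x', hx', rfl⟩ _ ⟨y', hy', rfl⟩ hxy hxy'
    exact hEhom x hx y hy x' hx' y' hy' (hF.reflect_lt hxy) (hF.reflect_lt hxy')

theorem cofinalBelow_setOf_forall_cofinalBelow {α : Ordinal} (hα : ℵ₀ < α.cof)
    {S : ℕ → Set Ordinal} (hS : ∀ n, CofinalBelow (S n) α) :
    CofinalBelow {δ | ∀ n, CofinalBelow (S n) δ} α := by
  choose! next hnextS hnext_gt hnext_lt using hS
  intro y hy
  have hδα : nfpFamily next (next 0 y) < α :=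
    nfpFamily_lt_ord_lift hα (by simpa using hα) (fun n b hb => hnext_lt n b hb)
      (hnext_lt 0 y hy)
  refine ⟨_, fun n x hx => ?_, (hnext_gt 0 y hy).trans_le (le_nfpFamily _ _), hδα⟩
  obtain ⟨l, hl⟩ := lt_nfpFamily_iff.1 hx
  have hw : l.foldr next (next 0 y) < α := (foldr_le_nfpFamily _ _ _).trans_lt hδα
  refine ⟨next n _, hnextS n _ hw, hl.trans (hnext_gt n _ hw), ?_⟩
  exact (hnext_gt n _ (hnext_lt n _ hw)).trans_le (foldr_le_nfpFamily next _ (n :: n :: l))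

theorem CofinalBelow.exists_strictMono_seq {S : Set Ordinal} {γ : Ordinal}
    (hS : CofinalBelow S γ) (hγ : γ.cof = ℵ₀) {δ : Ordinal} (hδS : δ ∈ S) (hδγ : δ < γ) :
    ∃ u : ℕ → Ordinal, u 0 = δ ∧ StrictMono u ∧ (∀ k, u k ∈ S) ∧ (∀ k, u k < γ) ∧
      ∀ x < γ, ∃ k, x < u k := by
  obtain ⟨s, hs⟩ := exists_isFundamentalSeq (o := γ) (a := ω) (by rw [hγ, ord_aleph0])
  choose! next hnextS hnext_gt hnext_lt using hS
  set u : ℕ → Ordinal :=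
    fun k => Nat.rec δ (fun k x => next (max x (s ⟨k, natCast_lt_omega0 k⟩))) k
  have hu k : u k ∈ S ∧ u k < γ := by
    induction k with
    | zero => exact ⟨hδS, hδγ⟩
    | succ k ih => exact ⟨hnextS _ (max_lt ih.2 (s _).2), hnext_lt _ (max_lt ih.2 (s _).2)⟩
  have hu_gt k : max (u k) (s ⟨k, natCast_lt_omega0 k⟩) < u (k + 1) :=
    hnext_gt _ (max_lt (hu k).2 (s _).2)
  refine ⟨u, rfl, strictMono_nat_of_lt_succ fun k => (le_max_left _ _).trans_lt (hu_gt k),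
    fun k => (hu k).1, fun k => (hu k).2, fun x hx => ?_⟩
  obtain ⟨_, ⟨⟨i, hi⟩, rfl⟩, hxi⟩ := hs.isCofinal_range ⟨x, hx⟩
  obtain ⟨k, rfl⟩ := lt_omega0.1 hi
  exact ⟨k + 1, (show x ≤ s ⟨k, hi⟩ from hxi).trans_lt ((le_max_right _ _).trans_lt (hu_gt k))⟩

theorem intervalType_eq_of_cofinalBelow {n m : ℕ} {P : Fin m → Set Ordinal} {E : Set Ordinal}
    (hE : IsHomogeneous (intervalType n P) E) {β γ₁ γ₂ : Ordinal} (h₁ : CofinalBelow E γ₁)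
    (h₂ : CofinalBelow E γ₂) (hc₁ : γ₁.cof = ℵ₀) (hc₂ : γ₂.cof = ℵ₀) (hβ₁ : β < γ₁)
    (hβ₂ : β < γ₂) : intervalType n P β γ₁ = intervalType n P β γ₂ := by
  obtain ⟨δ, hδE, hβδ, hδ₁, hδ₂⟩ : ∃ δ ∈ E, β < δ ∧ δ < γ₁ ∧ δ < γ₂ := by
    obtain ⟨z₁, hz₁, hβz₁, hz₁γ⟩ := h₁ β hβ₁
    obtain ⟨z₂, hz₂, hβz₂, hz₂γ⟩ := h₂ β hβ₂
    rcases le_total z₁ z₂ with h | h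
    exacts [⟨z₁, hz₁, hβz₁, hz₁γ, h.trans_lt hz₂γ⟩, ⟨z₂, hz₂, hβz₂, h.trans_lt hz₁γ, hz₂γ⟩]
  obtain ⟨u, hu0, hu, huE, huγ, hucof⟩ := h₁.exists_strictMono_seq hc₁ hδE hδ₁
  obtain ⟨v, hv0, hv, hvE, hvγ, hvcof⟩ := h₂.exists_strictMono_seq hc₂ hδE hδ₂
  refine intervalType_eq_of_seq n P hu.monotone hv.monotone (hu0 ▸ hβδ.le) (hv0 ▸ hβδ.le)
    huγ hvγ hucof hvcof (by rw [hu0, hv0]) fun k => ?_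
  exact hE _ (huE k) _ (huE (k + 1)) _ (hvE k) _ (hvE (k + 1)) (hu k.lt_succ_self)
    (hv k.lt_succ_self)

theorem exists_club_same_monadic_theory_of_tails_general
    (α : Ordinal) (hα : Cardinal.aleph0 < α.cof) (m : ℕ)
    (P : Fin m → Set Ordinal) :
    ∃ J : Set Ordinal, J ⊆ Set.Iio α ∧
      (∀ β < α, ∃ x ∈ J, β < x) ∧
      (∀ x < α, Order.IsSuccLimit x → (∀ y < x, ∃ z ∈ J, y < z ∧ z < x) → x ∈ J) ∧
      ∀ β < α, ∀ γ₁ ∈ J, ∀ γ₂ ∈ J,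
        γ₁.cof = Cardinal.aleph0 → γ₂.cof = Cardinal.aleph0 →
        β < γ₁ → β < γ₂ →
        ∀ φ : MSO m 0 0,
          MSO.SatS (α := ↥(Set.Ico β γ₁))
            (fun i => {x : ↥(Set.Ico β γ₁) | (x : Ordinal) ∈ P i}) φ ↔
          MSO.SatS (α := ↥(Set.Ico β γ₂))
            (fun i => {x : ↥(Set.Ico β γ₂) | (x : Ordinal) ∈ P i}) φ := by
  choose E hEcof hEhom using fun n =>
    exists_cofinalBelow_isHomogeneous hα (isAdditive_intervalType n P)
  refine ⟨{γ | γ < α ∧ ∀ n, CofinalBelow (E n) γ}, fun γ hγ => hγ.1, fun β hβ => ?_, ?_, ?_⟩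
  · obtain ⟨γ, hγ, hβγ, hγα⟩ := cofinalBelow_setOf_forall_cofinalBelow hα hEcof β hβ
    exact ⟨γ, ⟨hγα, hγ⟩, hβγ⟩
  · refine fun γ hγα _ hγ => ⟨hγα, fun n y hy => ?_⟩
    obtain ⟨γ', ⟨-, hγ'⟩, hyγ', hγ'γ⟩ := hγ y hy
    obtain ⟨z, hz, hyz, hzγ'⟩ := hγ' n y hyγ'
    exact ⟨z, hz, hyz, hzγ'.trans hγ'γ⟩
  · rintro β - γ₁ ⟨-, hγ₁⟩ γ₂ ⟨-, hγ₂⟩ hc₁ hc₂ hβ₁ hβ₂ φ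
    exact φ.satS_iff_of_hintikka_eq
      (intervalType_eq_of_cofinalBelow (hEhom _) (hγ₁ _) (hγ₂ _) hc₁ hc₂ hβ₁ hβ₂)

/-- (Shelah, Lemma 4.1.) If `cf α > ω` and `P₁,…,Pₘ ⊆ α`, then there is a club `J ⊆ α`
such that, for each `β < α`, all restrictions of `(α,<,P̄)` to intervals `[β,γ)` with
`γ ∈ J`, `cf γ = ω`, `γ > β` satisfy the same monadic sentences. -/
theorem exists_club_same_monadic_theory_of_tails
    (α : Ordinal) (hα : Cardinal.aleph0 < α.cof) (m : ℕ)
    (P : Fin m → Set Ordinal) (hP : ∀ i, P i ⊆ Set.Iio α) :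
    ∃ J : Set Ordinal, J ⊆ Set.Iio α ∧
      (∀ β < α, ∃ x ∈ J, β < x) ∧
      (∀ x < α, Order.IsSuccLimit x → (∀ y < x, ∃ z ∈ J, y < z ∧ z < x) → x ∈ J) ∧
      ∀ β < α, ∀ γ₁ ∈ J, ∀ γ₂ ∈ J,
        γ₁.cof = Cardinal.aleph0 → γ₂.cof = Cardinal.aleph0 →
        β < γ₁ → β < γ₂ →
        ∀ φ : MSO m 0 0,
          MSO.SatS (α := ↥(Set.Ico β γ₁))
            (fun i => {x : ↥(Set.Ico β γ₁) | (x : Ordinal) ∈ P i}) φ ↔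
          MSO.SatS (α := ↥(Set.Ico β γ₂))
            (fun i => {x : ↥(Set.Ico β γ₂) | (x : Ordinal) ∈ P i}) φ :=
  exists_club_same_monadic_theory_of_tails_general α hα m P
end

section
/- Let α be an ordinal of uncountable cofinality and f an additive coloring of α by a finite set T of n colors. Then there exist a club J ⊆ α and partitions J = J₁ ∪ … ∪ J_{|T|} = J¹ ∪ … ∪ J^{|T|} (the J_k pairwise disjoint, the J^ℓ pairwise disjoint) and colors t_k^ℓ ∈ T such that for all a < b in J with a ∈ J_k and b ∈ J^ℓ, f(a,b) = t_k^ℓ. -/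
/-!
Call `a, a' < α` eventually agreeing if `f a c = f a' c` for some `c < α` above both. By
additivity they then agree at every larger `d < α`, so this is an equivalence relation, and it has
finitely many classes since pairwise non-agreeing elements get distinct colors at a common upper
bound. Fix `r < α` above the least element `ā` of every class.

For `x < α`, the partitions of `[0, x)` by `f (·, b)` get coarser as `b` grows, so at a `b` where
their number of blocks is minimal every eventual agreement below `x` has already happened. The
limits `c > r` closed under `x ↦ b` form a club because `cf α > ω`, and for `a < c` in it
`f a c = f ā c = f ā r + f r c`: the color depends only on the class of `a`, which `f ā r`
determines, and on `f r c`.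
-/

open Set Order Cardinal

theorem Function.FactorsThrough.of_ncard_range_le {X T : Type*} [Finite T] {g h : X → T}
    (hgh : h.FactorsThrough g) (hcard : (range g).ncard ≤ (range h).ncard) :
    g.FactorsThrough h := by
  set φ := Function.extend g h id
  have hφ : h = φ ∘ g := funext fun u => (hgh.extend_apply id u).symm
  have hinj : InjOn φ (range g) := by
    refine injOn_of_ncard_image_eq (le_antisymm (ncard_image_le) ?_)
    rwa [← range_comp, ← hφ]
  intro u v huv
  exact hinj (mem_range_self u) (mem_range_self v) (by simpa only [hφ, Function.comp_apply] using huv)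

theorem Ordinal.exists_lt_of_finite {α : Ordinal} (hα : IsSuccLimit α) {S : Set Ordinal}
    (hS : S.Finite) (hSα : S ⊆ Iio α) : ∃ b < α, ∀ a ∈ S, a < b := by
  refine ⟨succ (sSup S), hα.succ_lt ?_, fun a ha => lt_succ_of_le (le_csSup hS.bddAbove ha)⟩
  rcases S.eq_empty_or_nonempty with rfl | hne
  · simpa using hα.pos
  · exact hSα (hne.csSup_mem hS)

theorem Ordinal.exists_isSuccLimit_closed {α β : Ordinal} (hα : ℵ₀ < α.cof)
    {R : Ordinal → Ordinal → Prop} (hR : ∀ x < α, ∃ b < α, R x b)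
    (hanti : ∀ ⦃x x' b⦄, x' ≤ x → R x b → R x' b) (hβ : β < α) :
    ∃ c, β < c ∧ c < α ∧ IsSuccLimit c ∧ ∀ y < c, ∃ b < c, R y b := by
  have hlim : IsSuccLimit α := Ordinal.one_lt_cof_iff.mp (one_lt_aleph0.trans hα)
  choose! g hgα hgR using hR
  set h : Ordinal → Ordinal := fun x => succ (max x (g x))
  have hh : ∀ x, x < h x ∧ g x < h x := fun x =>
    ⟨lt_succ_of_le (le_max_left _ _), lt_succ_of_le (le_max_right _ _)⟩
  have hcα : nfp h β < α := nfp_lt_ord hα (fun x hx => hlim.succ_lt (max_lt hx (hgα x hx))) hβ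
  have hbelow : ∀ y < nfp h β, ∃ z, y < z ∧ h z ≤ nfp h β := fun y hy => by
    obtain ⟨n, hn⟩ := lt_nfp_iff.mp hy
    refine ⟨h^[n] β, hn, ?_⟩
    simpa only [Function.iterate_succ_apply'] using iterate_le_nfp h β (n + 1)
  have hβc : β < nfp h β := (hh β).1.trans_le (iterate_le_nfp h β 1)
  refine ⟨nfp h β, hβc, hcα, ⟨not_isMin_of_lt hβc, isSuccPrelimit_of_succ_lt fun y hy => ?_⟩,
    fun y hy => ?_⟩ <;> obtain ⟨z, hyz, hzc⟩ := hbelow y hy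
  · exact (succ_le_of_lt hyz).trans_lt ((hh z).1.trans_le hzc)
  · have hzα : z < α := ((hh z).1.trans_le hzc).trans hcα
    exact ⟨g z, (hh z).2.trans_le hzc, hanti hyz.le (hgR z hzα)⟩

theorem exists_fiber_partitions {X ι T : Type*} [LT X] [Nonempty T] (J : Set X) (p q : X → ι)
    (F : X → X → T) (hF : ∀ a ∈ J, ∀ b ∈ J, ∀ a' ∈ J, ∀ b' ∈ J, a < b → a' < b' →
      p a = p a' → q b = q b' → F a b = F a' b') :
    ∃ A B : ι → Set X, ∃ t : ι → ι → T,
      (⋃ k, A k) = J ∧ (⋃ l, B l) = J ∧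
      (∀ k k', k ≠ k' → A k ∩ A k' = ∅) ∧ (∀ l l', l ≠ l' → B l ∩ B l' = ∅) ∧
      ∀ a ∈ J, ∀ b ∈ J, a < b → ∀ k l, a ∈ A k → b ∈ B l → F a b = t k l := by
  let P := {ab : X × X // ab.1 ∈ J ∧ ab.2 ∈ J ∧ ab.1 < ab.2}
  have hfac : (fun ab : P => F ab.1.1 ab.1.2).FactorsThrough (fun ab => (p ab.1.1, q ab.1.2)) :=
    fun ab ab' h => hF _ ab.2.1 _ ab.2.2.1 _ ab'.2.1 _ ab'.2.2.1 ab.2.2.2 ab'.2.2.2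
      (congrArg Prod.fst h) (congrArg Prod.snd h)
  refine ⟨fun k => J ∩ p ⁻¹' {k}, fun l => J ∩ q ⁻¹' {l},
    fun k l => Function.extend (fun ab : P => (p ab.1.1, q ab.1.2)) (fun ab => F ab.1.1 ab.1.2)
      (fun _ => Classical.arbitrary T) (k, l), ?_, ?_, ?_, ?_, ?_⟩
  · ext; simp
  · ext; simp
  · intro k k' hk; ext; simp only [mem_inter_iff, mem_preimage, mem_singleton_iff]; grind
  · intro l l' hl; ext; simp only [mem_inter_iff, mem_preimage, mem_singleton_iff]; grind
  · rintro a ha b hb hab _ _ ⟨-, rfl⟩ ⟨-, rfl⟩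
    exact (hfac.extend_apply _ ⟨(a, b), ha, hb, hab⟩).symm

namespace AdditiveColoring

universe u

variable {T : Type*} {α : Ordinal.{u}} {f : Ordinal.{u} → Ordinal.{u} → T}
  {a a' b b' c r x : Ordinal.{u}}

def IsAdditive (α : Ordinal.{u}) (f : Ordinal.{u} → Ordinal.{u} → T) : Prop :=
  ∀ x₁ y₁ z₁ x₂ y₂ z₂ : Ordinal, x₁ < y₁ → y₁ < z₁ → z₁ < α → x₂ < y₂ → y₂ < z₂ → z₂ < α →
    f x₁ y₁ = f x₂ y₂ → f y₁ z₁ = f y₂ z₂ → f x₁ z₁ = f x₂ z₂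

theorem IsAdditive.apply_eq_of_apply_eq (hadd : IsAdditive α f) (ha : a < c) (ha' : a' < c)
    (hcb : c < b) (hb : b < α) (h : f a c = f a' c) : f a b = f a' b :=
  hadd a c b a' c b ha hcb hb ha' hcb hb h rfl

def EventuallyAgree (α : Ordinal.{u}) (f : Ordinal.{u} → Ordinal.{u} → T)
    (a a' : Ordinal.{u}) : Prop :=
  ∃ c, a < c ∧ a' < c ∧ c < α ∧ f a c = f a' c

theorem eventuallyAgree_refl (hα : IsSuccLimit α) (ha : a < α) : EventuallyAgree α f a a :=
  ⟨succ a, lt_succ a, lt_succ a, hα.succ_lt ha, rfl⟩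

theorem EventuallyAgree.symm (h : EventuallyAgree α f a a') : EventuallyAgree α f a' a :=
  let ⟨c, hac, ha'c, hcα, hf⟩ := h
  ⟨c, ha'c, hac, hcα, hf.symm⟩

theorem EventuallyAgree.trans (hadd : IsAdditive α f) (hα : IsSuccLimit α)
    (h₁ : EventuallyAgree α f a b) (h₂ : EventuallyAgree α f b c) : EventuallyAgree α f a c := by
  obtain ⟨d₁, had₁, hbd₁, hd₁α, hf₁⟩ := h₁
  obtain ⟨d₂, hbd₂, hcd₂, hd₂α, hf₂⟩ := h₂
  have hd₁ : d₁ < succ (max d₁ d₂) := lt_succ_of_le (le_max_left _ _)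
  have hd₂ : d₂ < succ (max d₁ d₂) := lt_succ_of_le (le_max_right _ _)
  have hα' : succ (max d₁ d₂) < α := hα.succ_lt (max_lt hd₁α hd₂α)
  exact ⟨_, had₁.trans hd₁, hcd₂.trans hd₂, hα',
    (hadd.apply_eq_of_apply_eq had₁ hbd₁ hd₁ hα' hf₁).trans
      (hadd.apply_eq_of_apply_eq hbd₂ hcd₂ hd₂ hα' hf₂)⟩

theorem finite_of_eventuallyAgree_imp_eq [Finite T] (hα : IsSuccLimit α) {S : Set Ordinal}
    (hSα : S ⊆ Iio α) (hS : ∀ a ∈ S, ∀ a' ∈ S, EventuallyAgree α f a a' → a = a') :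
    S.Finite := by
  by_contra hinf
  obtain ⟨s, hsS, hcard⟩ := Set.Infinite.exists_subset_card_eq hinf (Nat.card T + 1)
  obtain ⟨c, hcα, hsc⟩ := Ordinal.exists_lt_of_finite hα s.finite_toSet (hsS.trans hSα)
  have hinj : InjOn (fun a => f a c) s := fun a ha a' ha' h =>
    hS a (hsS ha) a' (hsS ha') ⟨c, hsc a ha, hsc a' ha', hcα, h⟩
  have hle : (s : Set Ordinal).ncard ≤ Nat.card T := hinj.ncard_image ▸ ncard_le_card _
  rw [ncard_coe_finset] at hle
  omega


noncomputable def minRep (α : Ordinal.{u}) (f : Ordinal.{u} → Ordinal.{u} → T) (a : Ordinal.{u}) :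
    Ordinal.{u} :=
  sInf {y | EventuallyAgree α f y a}

theorem eventuallyAgree_minRep (hα : IsSuccLimit α) (ha : a < α) :
    EventuallyAgree α f (minRep α f a) a :=
  csInf_mem (s := {y | EventuallyAgree α f y a}) ⟨a, eventuallyAgree_refl hα ha⟩

theorem minRep_le (hα : IsSuccLimit α) (ha : a < α) : minRep α f a ≤ a :=
  csInf_le' (eventuallyAgree_refl hα ha)

theorem minRep_eq_of_eventuallyAgree (hadd : IsAdditive α f) (hα : IsSuccLimit α)
    (h : EventuallyAgree α f a a') : minRep α f a = minRep α f a' := by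
  unfold minRep
  congr 1
  ext y
  exact ⟨fun hy => hy.trans hadd hα h, fun hy => hy.trans hadd hα h.symm⟩

theorem exists_minRep_lt [Finite T] (hadd : IsAdditive α f) (hα : IsSuccLimit α) :
    ∃ r < α, ∀ a < α, minRep α f a < r := by
  have hsub : minRep α f '' Iio α ⊆ Iio α := by
    rintro _ ⟨a, ha, rfl⟩
    exact (minRep_le hα ha).trans_lt ha
  have hfin : (minRep α f '' Iio α).Finite := by
    refine finite_of_eventuallyAgree_imp_eq (f := f) hα hsub ?_
    rintro _ ⟨a, ha, rfl⟩ _ ⟨a', ha', rfl⟩ h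
    exact minRep_eq_of_eventuallyAgree hadd hα
      (((eventuallyAgree_minRep hα ha).symm.trans hadd hα h).trans hadd hα
        (eventuallyAgree_minRep hα ha'))
  obtain ⟨r, hrα, hr⟩ := Ordinal.exists_lt_of_finite hα hfin hsub
  exact ⟨r, hrα, fun a ha => hr _ (mem_image_of_mem _ ha)⟩

def Settles (α : Ordinal.{u}) (f : Ordinal.{u} → Ordinal.{u} → T) (x b : Ordinal.{u}) : Prop :=
  ∀ a < x, ∀ a' < x, EventuallyAgree α f a a' → f a b = f a' b

theorem Settles.mono {x' : Ordinal.{u}} (h : Settles α f x b) (hx : x' ≤ x) : Settles α f x' b :=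
  fun a ha a' ha' => h a (ha.trans_le hx) a' (ha'.trans_le hx)

theorem exists_settles [Finite T] (hadd : IsAdditive α f) (hα : IsSuccLimit α) (hx : x < α) :
    ∃ b, x ≤ b ∧ b < α ∧ Settles α f x b := by
  obtain ⟨b, hmin⟩ := exists_minimalFor_of_wellFoundedLT (fun b => x ≤ b ∧ b < α)
    (fun b => (range fun u : Iio x => f u b).ncard) ⟨x, le_rfl, hx⟩
  obtain ⟨hxb, hbα⟩ := hmin.prop
  refine ⟨b, hxb, hbα, fun a ha a' ha' ⟨c, hac, ha'c, hcα, hfc⟩ => ?_⟩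
  have hbd : b < succ (max b c) := lt_succ_of_le (le_max_left b c)
  have hcd : c < succ (max b c) := lt_succ_of_le (le_max_right b c)
  have hdα : succ (max b c) < α := hα.succ_lt (max_lt hbα hcα)
  have hcoarser : (fun u : Iio x => f u (succ (max b c))).FactorsThrough (fun u => f u b) :=
    fun u v h => hadd.apply_eq_of_apply_eq (u.2.trans_le hxb) (v.2.trans_le hxb) hbd hdα h
  exact hcoarser.of_ncard_range_le (hmin.le ⟨hxb.trans hbd.le, hdα⟩) (a := ⟨a, ha⟩) (b := ⟨a', ha'⟩)
    (hadd.apply_eq_of_apply_eq hac ha'c hcd hdα hfc)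

def IsSettlingPoint (α : Ordinal.{u}) (f : Ordinal.{u} → Ordinal.{u} → T) (c : Ordinal.{u}) :
    Prop :=
  c < α ∧ IsSuccLimit c ∧ ∀ y < c, ∃ b < c, y ≤ b ∧ Settles α f y b

theorem exists_isSettlingPoint_gt [Finite T] (hadd : IsAdditive α f) (hα : ℵ₀ < α.cof)
    {β : Ordinal.{u}} (hβ : β < α) : ∃ c, β < c ∧ IsSettlingPoint α f c := by
  have hlim : IsSuccLimit α := Ordinal.one_lt_cof_iff.mp (one_lt_aleph0.trans hα)
  exact Ordinal.exists_isSuccLimit_closed hα (R := fun x b => x ≤ b ∧ Settles α f x b)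
    (fun x hx => let ⟨b, hxb, hbα, hb⟩ := exists_settles hadd hlim hx; ⟨b, hbα, hxb, hb⟩)
    (fun _ _ _ hx ⟨hxb, hb⟩ => ⟨hx.trans hxb, hb.mono hx⟩) hβ

theorem isSettlingPoint_of_isSuccLimit (hcα : c < α) (hc : IsSuccLimit c)
    (h : ∀ y < c, ∃ z, IsSettlingPoint α f z ∧ y < z ∧ z < c) : IsSettlingPoint α f c := by
  refine ⟨hcα, hc, fun y hy => ?_⟩
  obtain ⟨z, hz, hyz, hzc⟩ := h y hy
  obtain ⟨b, hbz, hyb, hb⟩ := hz.2.2 y hyz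
  exact ⟨b, hbz.trans hzc, hyb, hb⟩

theorem IsSettlingPoint.apply_eq_of_eventuallyAgree (hadd : IsAdditive α f)
    (hc : IsSettlingPoint α f c) (ha : a < c) (ha' : a' < c) (h : EventuallyAgree α f a a') :
    f a c = f a' c := by
  obtain ⟨b, hbc, hyb, hb⟩ := hc.2.2 (succ (max a a')) (hc.2.1.succ_lt (max_lt ha ha'))
  have hab : a < b := (lt_succ_of_le (le_max_left a a')).trans_le hyb
  have ha'b : a' < b := (lt_succ_of_le (le_max_right a a')).trans_le hyb
  exact hadd.apply_eq_of_apply_eq hab ha'b hbc hc.1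
    (hb a (lt_succ_of_le (le_max_left a a')) a' (lt_succ_of_le (le_max_right a a')) h)

theorem IsSettlingPoint.apply_minRep (hadd : IsAdditive α f) (hα : IsSuccLimit α)
    (hb : IsSettlingPoint α f b) (hab : a < b) : f (minRep α f a) b = f a b :=
  hb.apply_eq_of_eventuallyAgree hadd ((minRep_le hα (hab.trans hb.1)).trans_lt hab) hab
    (eventuallyAgree_minRep hα (hab.trans hb.1))

theorem IsSettlingPoint.apply_eq_apply (hadd : IsAdditive α f) (hα : IsSuccLimit α) (hrα : r < α)
    (hr : ∀ a < α, minRep α f a < r) (hb : IsSettlingPoint α f b) (hb' : IsSettlingPoint α f b')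
    (hrb : r < b) (hrb' : r < b') (hab : a < b) (ha'b' : a' < b')
    (hclass : f (minRep α f a) r = f (minRep α f a') r) (hcolor : f r b = f r b') :
    f a b = f a' b' := by
  have ha : a < α := hab.trans hb.1
  have ha' : a' < α := ha'b'.trans hb'.1
  have hrep : minRep α f a = minRep α f a' := minRep_eq_of_eventuallyAgree hadd hα
    (((eventuallyAgree_minRep hα ha).symm.trans hadd hα ⟨r, hr a ha, hr a' ha', hrα, hclass⟩).trans
      hadd hα (eventuallyAgree_minRep hα ha'))
  calc f a b = f (minRep α f a) b := (hb.apply_minRep hadd hα hab).symm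
    _ = f (minRep α f a) b' := hadd _ r b _ r b' (hr a ha) hrb hb.1 (hr a ha) hrb' hb'.1 rfl hcolor
    _ = f a' b' := hrep ▸ hb'.apply_minRep hadd hα ha'b'

end AdditiveColoring

open AdditiveColoring in
/-- (Shelah, Conclusion 1.2.) If `α` has uncountable cofinality and `f` is an additive
coloring of `α` by a finite set `T`, then there is a club `J ⊆ α` together with
partitions `J = ⋃ₖ Jₖ = ⋃ˡ Jˡ` and colors `t k l` such that `f a b = t k l` whenever
`a < b` are in `J` with `a ∈ Jₖ`, `b ∈ Jˡ`. -/
theorem additive_coloring_club_double_partition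
    (α : Ordinal) (hα : Cardinal.aleph0 < α.cof)
    (T : Type) [Finite T] (f : Ordinal → Ordinal → T)
    (hadd : ∀ x₁ y₁ z₁ x₂ y₂ z₂ : Ordinal,
      x₁ < y₁ → y₁ < z₁ → z₁ < α → x₂ < y₂ → y₂ < z₂ → z₂ < α →
      f x₁ y₁ = f x₂ y₂ → f y₁ z₁ = f y₂ z₂ → f x₁ z₁ = f x₂ z₂) :
    ∃ J : Set Ordinal, J ⊆ Set.Iio α ∧
      (∀ β < α, ∃ x ∈ J, β < x) ∧
      (∀ x < α, Order.IsSuccLimit x → (∀ y < x, ∃ z ∈ J, y < z ∧ z < x) → x ∈ J) ∧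
      ∃ A B : Fin (Nat.card T) → Set Ordinal,
        ∃ t : Fin (Nat.card T) → Fin (Nat.card T) → T,
          (⋃ k, A k) = J ∧ (⋃ l, B l) = J ∧
          (∀ k k', k ≠ k' → A k ∩ A k' = ∅) ∧
          (∀ l l', l ≠ l' → B l ∩ B l' = ∅) ∧
          ∀ a ∈ J, ∀ b ∈ J, a < b → ∀ k l, a ∈ A k → b ∈ B l → f a b = t k l := by
  have hlim : IsSuccLimit α := Ordinal.one_lt_cof_iff.mp (one_lt_aleph0.trans hα)
  obtain ⟨r, hrα, hr⟩ := exists_minRep_lt hadd hlim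
  have : Nonempty T := ⟨f 0 0⟩
  let e := Finite.equivFin T
  refine ⟨{c | r < c ∧ IsSettlingPoint α f c}, fun c hc => hc.2.1, fun β hβ => ?_,
    fun x hxα hx hJ => ?_, exists_fiber_partitions _ (fun a => e (f (minRep α f a) r))
      (fun b => e (f r b)) f fun a _ b hb a' _ b' hb' hab ha'b' hA hB => ?_⟩
  · obtain ⟨c, hβc, hc⟩ := exists_isSettlingPoint_gt hadd hα (max_lt hβ hrα)
    exact ⟨c, ⟨(le_max_right β r).trans_lt hβc, hc⟩, (le_max_left β r).trans_lt hβc⟩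
  · obtain ⟨z, hz, -, hzx⟩ := hJ 0 hx.pos
    refine ⟨hz.1.trans hzx, isSettlingPoint_of_isSuccLimit hxα hx fun y hy => ?_⟩
    obtain ⟨z, hz, hyz, hzx⟩ := hJ y hy
    exact ⟨z, hz.2, hyz, hzx⟩
  · exact hb.2.apply_eq_apply hadd hlim hrα hr hb'.2 hb.1 hb'.1 hab ha'b'
      (e.injective hA) (e.injective hB)
end

section
/- Assume CH (or just: the union of fewer than 2^{ℵ₀} first-category sets is not all of ℝ). Let {D_i : i ∈ J} be countable dense subsets of ℝ with D = ⋃_{i∈J} D_i satisfying |D ∩ P| < 2^{ℵ₀} for every perfect set P. Then there exists Q ⊆ ℝ \ D such that: (A) if P is perfect, P ∩ D ⊆ D_i for some i ∈ J, and D_i is dense in P, then |P ∩ Q| < 2^{ℵ₀}; and (B) if P is perfect, D is dense in P, and for no interval I of P and i ∈ J is P ∩ D ∩ I ⊆ D_i, then P ∩ Q ≠ ∅. -/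
/-- A "perfect set" in Shelah's sense: a closed, nowhere dense subset of `ℝ` with
no isolated points and at least two points. -/
def ShPerfect (P : Set ℝ) : Prop :=
  Perfect P ∧ IsNowhereDense P ∧ P.Nontrivial

/-- `x` is an inner point of `P`: `x ∈ P` and `P` accumulates at `x` from both sides. -/
def InnerPt (P : Set ℝ) (x : ℝ) : Prop :=
  x ∈ P ∧ ∀ ε : ℝ, 0 < ε →
    (Set.Ioo (x - ε) x ∩ P).Nonempty ∧ (Set.Ioo x (x + ε) ∩ P).Nonempty

/-- `D'` is dense in `P`: between any two inner points of `P` there is an inner point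
of `P` belonging to `D'`. -/
def DenseInP (D' P : Set ℝ) : Prop :=
  ∀ x y : ℝ, InnerPt P x → InnerPt P y → x < y →
    ∃ z : ℝ, z ∈ D' ∧ InnerPt P z ∧ x < z ∧ z < y

/-!
Enumerate in order type `𝔠` the perfect sets `A` with `A ∩ D ⊆ Dfam i` for some `i`, and the
perfect sets `B` of the kind in (B). For each `B` pick a point of `B \ D` outside every `A`
enumerated no later than `B`, and let `Q` be the set of picked points: an `A` meets `Q` only in
points picked for the fewer than `𝔠` sets `B` enumerated before it. The picks exist because each
such `A` meets `B` in a closed set containing no portion of `B`, while a perfect nowhere dense set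
is not covered by fewer than `𝔠` such sets and points: the Cantor function of `B`, which collapses
the gaps of `B`, carries such a cover to a cover of `ℝ` by fewer than `𝔠` nowhere dense sets.
-/
open Set Cardinal Filter

lemma countable_setOf_not_innerPt (P : Set ℝ) : {x ∈ P | ¬ InnerPt P x}.Countable := by
  refine ((countable_setOfPred_isolated_left_within (s := P)).union
    (countable_setOfPred_isolated_right_within (s := P))).mono ?_
  rintro x ⟨hxP, hx⟩
  obtain ⟨ε, hε, hgap⟩ : ∃ ε > 0,
      Ioo (x - ε) x ∩ P = ∅ ∨ Ioo x (x + ε) ∩ P = ∅ := by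
    simpa [InnerPt, hxP, not_nonempty_iff_eq_empty, imp_iff_not_or] using hx
  rcases hgap with hgap | hgap
  · refine Or.inl ⟨hxP, empty_mem_iff_bot.1 (mem_nhdsWithin.2 ⟨Ioi (x - ε), isOpen_Ioi,
      by simpa using hε, fun y ⟨hy, hyP, hyx⟩ => hgap.subset ⟨⟨hy, hyx⟩, hyP⟩⟩)⟩
  · refine Or.inr ⟨hxP, empty_mem_iff_bot.1 (mem_nhdsWithin.2 ⟨Iio (x + ε), isOpen_Iio,
      by simpa using hε, fun y ⟨hy, hyP, hyx⟩ => hgap.subset ⟨⟨hyx, hy⟩, hyP⟩⟩)⟩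

lemma Perfect.not_countable_inter_isOpen {α : Type*} [MetricSpace α] [CompleteSpace α]
    {P U : Set α} (hP : Perfect P) (hU : IsOpen U)
    (hne : (P ∩ U).Nonempty) : ¬ (P ∩ U).Countable := by
  obtain ⟨x, hxP, hxU⟩ := hne
  obtain ⟨t, ht, htc, htU⟩ := exists_mem_nhds_isClosed_subset (hU.mem_nhds hxU)
  obtain ⟨hC, hCne⟩ := hP.closure_nhds_inter x hxP (mem_interior_iff_mem_nhds.2 ht)
    isOpen_interior
  have hCsub : closure (interior t ∩ P) ⊆ P ∩ U :=
    (closure_minimal (inter_subset_inter_left _ interior_subset) (htc.inter hP.closed)).trans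
      fun y hy => ⟨hy.2, htU hy.1⟩
  obtain ⟨f, hfC, -, hf⟩ := hC.exists_nat_bool_injection hCne
  have h𝔠 : 𝔠 ≤ #↥(P ∩ U) := by
    have hlift : lift.{_, 0} #(ℕ → Bool) = 𝔠 := by simp
    rw [← hlift, ← lift_uzero #↥(P ∩ U)]
    exact lift_mk_le_lift_mk_of_injective (f := fun b => (⟨f b, hCsub (hfC ⟨b, rfl⟩)⟩ : ↥(P ∩ U)))
      fun a b h => hf (congrArg Subtype.val h)
  exact fun hcount =>
    (h𝔠.trans (le_aleph0_iff_set_countable.2 hcount)).not_gt aleph0_lt_continuum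

lemma Perfect.exists_innerPt_lt {P U : Set ℝ} (hP : Perfect P) (hU : IsOpen U)
    (hne : (P ∩ U).Nonempty) :
    ∃ p q, p ∈ U ∧ q ∈ U ∧ InnerPt P p ∧ InnerPt P q ∧ p < q := by
  have hinner : {x ∈ P ∩ U | InnerPt P x}.Nontrivial := by
    refine not_subsingleton_iff.1 fun hsub => hP.not_countable_inter_isOpen hU hne ?_
    refine (hsub.countable.union (countable_setOf_not_innerPt P)).mono fun x hx => ?_
    by_cases h : InnerPt P x
    · exact Or.inl ⟨hx, h⟩
    · exact Or.inr ⟨hx.1, h⟩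
  obtain ⟨p, ⟨⟨-, hpU⟩, hp⟩, q, ⟨⟨-, hqU⟩, hq⟩, hpq⟩ := hinner.exists_lt
  exact ⟨p, q, hpU, hqU, hp, hq, hpq⟩

lemma isNowhereDense_of_forall_exists_Ioo {α : Type*} [LinearOrder α] [DenselyOrdered α]
    [NoMinOrder α] [NoMaxOrder α] [TopologicalSpace α] [OrderTopology α] {s : Set α}
    (H : ∀ c d, c < d → ∃ c' d', c' < d' ∧ Ioo c' d' ⊆ Ioo c d ∧ Disjoint (Ioo c' d') s) :
    IsNowhereDense s := by
  refine eq_empty_iff_forall_notMem.2 fun x hx => ?_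
  obtain ⟨c, d, hx, hcd⟩ := mem_nhds_iff_exists_Ioo_subset.1 (mem_interior_iff_mem_nhds.1 hx)
  obtain ⟨c', d', hlt, hsub, hdisj⟩ := H c d (hx.1.trans hx.2)
  obtain ⟨y, hy⟩ := nonempty_Ioo.2 hlt
  exact (hdisj.closure_right isOpen_Ioo).ne_of_mem hy (hcd (hsub hy)) rfl

lemma mk_setOf_isClosed_le_continuum : #{P : Set ℝ | IsClosed P} ≤ 𝔠 := by
  have hbasis : #↥(⋃ (a : ℚ) (b : ℚ) (_ : a < b), {Ioo (a : ℝ) (b : ℝ)}) ≤ 𝔠 :=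
    ((countable_iUnion fun _ => countable_iUnion fun _ => countable_iUnion fun _ =>
      countable_singleton _).le_aleph0).trans aleph0_le_continuum
  refine (mk_le_mk_of_subset fun P (hP : IsClosed P) => ?_).trans
    (MeasurableSpace.cardinal_measurableSet_le_continuum hbasis)
  rw [mem_ofPred_eq, ← Real.borel_eq_generateFrom_Ioo_rat]
  exact hP.measurableSet

/-- For closed `N`, this says that `N ∩ P` is nowhere dense in `P`. -/
def ContainsNoPortionOf (N P : Set ℝ) : Prop :=
  ∀ a b : ℝ, (P ∩ Ioo a b).Nonempty → ¬ P ∩ Ioo a b ⊆ N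

lemma Perfect.containsNoPortionOf_singleton {P : Set ℝ} (hP : Perfect P) (x : ℝ) :
    ContainsNoPortionOf {x} P := by
  rintro a b ⟨y, hyP, hy⟩ hsub
  obtain rfl : y = x := hsub ⟨hyP, hy⟩
  obtain ⟨z, ⟨hz, hzP⟩, hzy⟩ := preperfect_iff_nhds.1 hP.acc y hyP _ (isOpen_Ioo.mem_nhds hy)
  exact hzy (hsub ⟨hzP, hz⟩)

lemma containsNoPortionOf_of_inter_subset {A B D Di : Set ℝ} (hB : Perfect B) (hA : A ∩ D ⊆ Di)
    (hBD : ∀ a b, InnerPt B a → InnerPt B b → a < b → ¬ B ∩ D ∩ Ioo a b ⊆ Di) :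
    ContainsNoPortionOf A B := by
  intro c d hne hsub
  obtain ⟨p, q, hp, hq, hpI, hqI, hpq⟩ := hB.exists_innerPt_lt isOpen_Ioo hne
  exact hBD p q hpI hqI hpq fun x ⟨⟨hxB, hxD⟩, hx⟩ =>
    hA ⟨hsub ⟨hxB, hp.1.trans hx.1, hx.2.trans hq.2⟩, hxD⟩

@[ext]
structure Gap (P : Set ℝ) (u v : ℝ) where
  left : ℝ
  right : ℝ
  left_mem : left ∈ P
  right_mem : right ∈ P
  le_left : u ≤ left
  right_le : right ≤ v
  left_lt_right : left < right
  notMem : ∀ ⦃x⦄, left < x → x < right → x ∉ P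

namespace Gap

variable {P : Set ℝ} {u v : ℝ}

lemma left_injective : Function.Injective (left : Gap P u v → ℝ) := by
  intro g h hgh
  ext
  · exact hgh
  · by_contra hne
    rcases lt_or_gt_of_ne hne with hlt | hlt
    · exact h.notMem (hgh ▸ g.left_lt_right) hlt g.right_mem
    · exact g.notMem (hgh ▸ h.left_lt_right) hlt h.right_mem

noncomputable instance : LinearOrder (Gap P u v) := LinearOrder.lift' left left_injective

lemma right_le_left_of_lt {g h : Gap P u v} (hlt : g < h) : g.right ≤ h.left :=
  le_of_not_gt fun hc => g.notMem hlt hc h.left_mem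

lemma lt_of_right_le_left {g h : Gap P u v} (hle : g.right ≤ h.left) : g < h :=
  g.left_lt_right.trans_le hle

instance : Countable (Gap P u v) := by
  choose q hq using fun g : Gap P u v => exists_rat_btwn g.left_lt_right
  refine Function.Injective.countable (f := q) fun g h hgh => ?_
  by_contra hne
  rcases lt_or_gt_of_ne hne with hlt | hlt
  · linarith [right_le_left_of_lt hlt, (hq g).2, (hq h).1, congrArg ((↑) : ℚ → ℝ) hgh]
  · linarith [right_le_left_of_lt hlt, (hq h).2, (hq g).1, congrArg ((↑) : ℚ → ℝ) hgh]

lemma nonempty_inter_Ioo_right (hP : Perfect P) (g : Gap P u v) {b : ℝ} (hb : g.right < b) :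
    (P ∩ Ioo g.right b).Nonempty := by
  obtain ⟨y, ⟨hy, hyP⟩, hne⟩ := preperfect_iff_nhds.1 hP.acc g.right g.right_mem
    (Ioo g.left b) (Ioo_mem_nhds g.left_lt_right hb)
  exact ⟨y, hyP, lt_of_le_of_ne (le_of_not_gt fun hlt => g.notMem hy.1 hlt hyP) hne.symm, hy.2⟩

lemma right_lt_left_of_lt (hP : Perfect P) {g h : Gap P u v} (hlt : g < h) :
    g.right < h.left := by
  refine (right_le_left_of_lt hlt).lt_of_ne fun heq => ?_
  obtain ⟨y, hyP, hy⟩ := g.nonempty_inter_Ioo_right hP (heq ▸ h.left_lt_right)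
  exact h.notMem (heq ▸ hy.1) hy.2 hyP

lemma exists_between (hPc : IsClosed P) (hPn : IsNowhereDense P) {x y : ℝ} (hx : x ∈ P)
    (hy : y ∈ P) (hux : u ≤ x) (hxy : x < y) (hyv : y ≤ v) :
    ∃ g : Gap P u v, x ≤ g.left ∧ g.right ≤ y := by
  obtain ⟨z, hz, hzP⟩ : ∃ z ∈ Ioo x y, z ∉ P := by
    by_contra! h
    have := interior_maximal h isOpen_Ioo
    rw [hPc.isNowhereDense_iff.1 hPn, subset_empty_iff] at this
    exact (nonempty_Ioo.2 hxy).ne_empty this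
  have hA : sSup (P ∩ Icc x z) ∈ P ∩ Icc x z :=
    (hPc.inter isClosed_Icc).csSup_mem ⟨x, hx, le_rfl, hz.1.le⟩ ⟨z, fun _ hw => hw.2.2⟩
  have hB : sInf (P ∩ Icc z y) ∈ P ∩ Icc z y :=
    (hPc.inter isClosed_Icc).csInf_mem ⟨y, hy, hz.2.le, le_rfl⟩ ⟨z, fun _ hw => hw.2.1⟩
  have haz : sSup (P ∩ Icc x z) < z := hA.2.2.lt_of_ne fun h => hzP (h ▸ hA.1)
  have hzb : z < sInf (P ∩ Icc z y) := hB.2.1.lt_of_ne' fun h => hzP (h ▸ hB.1)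
  refine ⟨⟨_, _, hA.1, hB.1, hux.trans hA.2.1, hB.2.2.trans hyv, haz.trans hzb,
    fun w hw₁ hw₂ hwP => ?_⟩, hA.2.1, hB.2.2⟩
  rcases le_or_gt w z with hwz | hzw
  · exact hw₁.not_ge (le_csSup ⟨z, fun _ hw => hw.2.2⟩ ⟨hwP, hA.2.1.trans hw₁.le, hwz⟩)
  · exact hw₂.not_ge (csInf_le ⟨z, fun _ hw => hw.2.1⟩ ⟨hwP, hzw.le, hw₂.le.trans hB.2.2⟩)

lemma lt_left (hu : InnerPt P u) (g : Gap P u v) : u < g.left := by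
  refine g.le_left.lt_of_ne fun hug => ?_
  obtain ⟨w, hw, hwP⟩ := (hu.2 (g.right - u) (by linarith [g.left_lt_right])).2
  exact g.notMem (hug ▸ hw.1) (by linarith [hw.2]) hwP

lemma right_lt (hv : InnerPt P v) (g : Gap P u v) : g.right < v := by
  refine g.right_le.lt_of_ne fun hgv => ?_
  obtain ⟨w, hw, hwP⟩ := (hv.2 (v - g.left) (by linarith [g.left_lt_right])).1
  exact g.notMem (by linarith [hw.1]) (by rw [hgv]; exact hw.2) hwP

/-- Cantor's back-and-forth theorem: the gaps of `P` between two inner points form a countable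
dense order without endpoints. -/
lemma nonempty_orderIso_rat (hP : ShPerfect P) (hu : InnerPt P u) (hv : InnerPt P v)
    (huv : u < v) : Nonempty (Gap P u v ≃o ℚ) := by
  have hPc := hP.1.closed
  have hPn := hP.2.1
  have : Nonempty (Gap P u v) :=
    let ⟨g, _⟩ := exists_between hPc hPn hu.1 hv.1 le_rfl huv le_rfl; ⟨g⟩
  have : DenselyOrdered (Gap P u v) := ⟨fun g h hlt =>
    let ⟨k, hgk, hkh⟩ := exists_between hPc hPn g.right_mem h.left_mem
      (g.le_left.trans g.left_lt_right.le) (right_lt_left_of_lt hP.1 hlt)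
      (h.left_lt_right.le.trans h.right_le)
    ⟨k, lt_of_right_le_left hgk, lt_of_right_le_left hkh⟩⟩
  have : NoMinOrder (Gap P u v) := ⟨fun g =>
    let ⟨k, _, hkg⟩ := exists_between hPc hPn hu.1 g.left_mem le_rfl (lt_left hu g)
      (g.left_lt_right.le.trans g.right_le)
    ⟨k, lt_of_right_le_left hkg⟩⟩
  have : NoMaxOrder (Gap P u v) := ⟨fun g =>
    let ⟨k, hgk, _⟩ := exists_between hPc hPn g.right_mem hv.1
      (g.le_left.trans g.left_lt_right.le) (right_lt hv g) le_rfl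
    ⟨k, lt_of_right_le_left hgk⟩⟩
  exact Order.iso_of_countable_dense _ _

lemma exists_lt_of_nonempty_inter_Ioo (hP : ShPerfect P) {a b : ℝ} (hab : Ioo a b ⊆ Icc u v)
    (hne : (P ∩ Ioo a b).Nonempty) :
    ∃ g h : Gap P u v, g < h ∧ a < g.left ∧ h.right < b := by
  obtain ⟨p, q, hp, hq, hpI, hqI, hpq⟩ := hP.1.exists_innerPt_lt isOpen_Ioo hne
  obtain ⟨r, hr, hrP⟩ := (hqI.2 (b - q) (by linarith [hq.2])).2
  rw [add_sub_cancel] at hr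
  obtain ⟨g, hpg, hgq⟩ := exists_between hP.1.closed hP.2.1 hpI.1 hqI.1 (hab hp).1 hpq (hab hq).2
  obtain ⟨h, hqh, hhr⟩ := exists_between hP.1.closed hP.2.1 hqI.1 hrP (hab hq).1 hr.1
    (hab ⟨hq.1.trans hr.1, hr.2⟩).2
  exact ⟨g, h, lt_of_right_le_left (hgq.trans hqh), hp.1.trans_le hpg, hhr.trans_lt hr.2⟩

variable (P u v) in
/-- On these points the supremum defining `cantorFn` is over a nonempty bounded set. -/
def betweenGaps : Set ℝ := {x | ∃ g h : Gap P u v, g.right ≤ x ∧ x ≤ h.left}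

variable (τ : Gap P u v ≃o ℚ)

/-- The Cantor function of `P`: it collapses every gap `g` to the rational `τ g`. -/
noncomputable def cantorFn (x : ℝ) : ℝ := sSup ((fun g => (τ g : ℝ)) '' {g | g.right ≤ x})

lemma cast_lt_of_right_le_left {g h : Gap P u v} (hle : g.right ≤ h.left) :
    (τ g : ℝ) < τ h := by
  exact_mod_cast τ.lt_iff_lt.2 (lt_of_right_le_left hle)

lemma le_cantorFn {g h : Gap P u v} {x : ℝ} (hg : g.right ≤ x) (hh : x ≤ h.left) :
    (τ g : ℝ) ≤ cantorFn τ x :=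
  le_csSup ⟨τ h, by rintro _ ⟨k, hk, rfl⟩; exact (cast_lt_of_right_le_left τ (hk.trans hh)).le⟩
    ⟨g, hg, rfl⟩

lemma cantorFn_le {g h : Gap P u v} {x : ℝ} (hg : g.right ≤ x) (hh : x ≤ h.left) :
    cantorFn τ x ≤ τ h :=
  csSup_le ⟨_, g, hg, rfl⟩ <| by
    rintro _ ⟨k, hk, rfl⟩; exact (cast_lt_of_right_le_left τ (hk.trans hh)).le

lemma surjOn_cantorFn (hPc : IsClosed P) : SurjOn (cantorFn τ) (P ∩ betweenGaps P u v) univ := by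
  intro t _
  obtain ⟨g₀, hg₀⟩ : ∃ g, (τ g : ℝ) < t :=
    ⟨τ.symm (⌊t⌋ - 1), by
      simp only [OrderIso.apply_symm_apply]; push_cast; linarith [Int.floor_le t]⟩
  obtain ⟨h₀, hh₀⟩ : ∃ h, t < (τ h : ℝ) :=
    ⟨τ.symm (⌈t⌉ + 1), by
      simp only [OrderIso.apply_symm_apply]; push_cast; linarith [Int.le_ceil t]⟩
  have hbdd : BddAbove (right '' {g | (τ g : ℝ) < t}) := ⟨h₀.left, by
    rintro _ ⟨g, hg, rfl⟩
    exact right_le_left_of_lt (τ.lt_iff_lt.1 (by exact_mod_cast hg.trans hh₀))⟩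
  have hne : (right '' {g | (τ g : ℝ) < t}).Nonempty := ⟨_, g₀, hg₀, rfl⟩
  set x := sSup (right '' {g | (τ g : ℝ) < t})
  have hg₀x : g₀.right ≤ x := le_csSup hbdd ⟨g₀, hg₀, rfl⟩
  have hxh₀ : x ≤ h₀.left := csSup_le hne fun _ ⟨g, hg, hgx⟩ =>
    hgx ▸ right_le_left_of_lt (τ.lt_iff_lt.1 (by exact_mod_cast hg.trans hh₀))
  have hxP : x ∈ P := closure_minimal (by rintro _ ⟨g, -, rfl⟩; exact g.right_mem) hPc
    (csSup_mem_closure hne hbdd)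
  refine ⟨x, ⟨hxP, g₀, h₀, hg₀x, hxh₀⟩, le_antisymm ?_ ?_⟩
  · refine csSup_le ⟨_, g₀, hg₀x, rfl⟩ ?_
    rintro _ ⟨g, hgx, rfl⟩
    by_contra! htg
    have hxg : x ≤ g.left := csSup_le hne fun _ ⟨k, hk, hkx⟩ =>
      hkx ▸ right_le_left_of_lt (τ.lt_iff_lt.1 (by exact_mod_cast hk.trans htg))
    exact g.left_lt_right.not_ge (hgx.trans hxg)
  · by_contra! hxt
    obtain ⟨q, hxq, hqt⟩ := exists_rat_btwn hxt
    have hgx : (τ.symm q).right ≤ x := le_csSup hbdd ⟨τ.symm q, by simpa using hqt, rfl⟩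
    have := le_cantorFn τ hgx hxh₀
    simp only [OrderIso.apply_symm_apply] at this
    exact hxq.not_ge this

/-- A portion of `P` avoiding `N` contains two gaps, and `cantorFn` maps the points
of `P` between them onto the interval between their rationals. -/
lemma isNowhereDense_image_cantorFn (hP : ShPerfect P) {N : Set ℝ} (hN : IsClosed N)
    (hNP : ContainsNoPortionOf N P) :
    IsNowhereDense (cantorFn τ '' (N ∩ (P ∩ betweenGaps P u v))) := by
  refine isNowhereDense_of_forall_exists_Ioo fun c d hcd => ?_
  obtain ⟨q₁, hcq₁, hq₁d⟩ := exists_rat_btwn hcd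
  obtain ⟨q₂, hq₁q₂, hq₂d⟩ := exists_rat_btwn hq₁d
  have hG : (τ.symm q₁).right < (τ.symm q₂).left :=
    right_lt_left_of_lt hP.1 (τ.symm.lt_iff_lt.2 (by exact_mod_cast hq₁q₂))
  obtain ⟨w, hwP, hw⟩ := nonempty_inter_Ioo_right hP.1 _ hG
  obtain ⟨w', ⟨hw'P, hw'⟩, hw'N⟩ := not_subset.1 (hNP _ _ ⟨w, hwP, hw⟩)
  obtain ⟨a, b, hw'ab, hab⟩ := mem_nhds_iff_exists_Ioo_subset.1
    ((isOpen_Ioo.inter hN.isOpen_compl).mem_nhds ⟨hw', hw'N⟩)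
  have hIcc : Ioo a b ⊆ Icc u v := fun y hy =>
    ⟨(τ.symm q₁).le_left.trans ((τ.symm q₁).left_lt_right.trans (hab hy).1.1).le,
      ((hab hy).1.2.trans (τ.symm q₂).left_lt_right).le.trans (τ.symm q₂).right_le⟩
  obtain ⟨G₃, G₄, h34, haG₃, hG₄b⟩ := exists_lt_of_nonempty_inter_Ioo hP hIcc ⟨w', hw'P, hw'ab⟩
  have hG₃ : G₃.left ∈ Ioo a b := ⟨haG₃, G₃.left_lt_right.trans
    ((right_le_left_of_lt h34).trans_lt (G₄.left_lt_right.trans hG₄b))⟩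
  have hG₄ : G₄.right ∈ Ioo a b :=
    ⟨haG₃.trans ((show G₃.left < G₄.left from h34).trans G₄.left_lt_right), hG₄b⟩
  refine ⟨τ G₃, τ G₄, by exact_mod_cast τ.lt_iff_lt.2 h34, Ioo_subset_Ioo ?_ ?_, ?_⟩
  · calc c ≤ q₁ := hcq₁.le
      _ = (τ (τ.symm q₁) : ℝ) := by simp
      _ ≤ τ G₃ := (cast_lt_of_right_le_left τ (hab hG₃).1.1.le).le
  · calc (τ G₄ : ℝ) ≤ τ (τ.symm q₂) := (cast_lt_of_right_le_left τ (hab hG₄).1.2.le).le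
      _ = q₂ := by simp
      _ ≤ d := hq₂d.le
  · rw [disjoint_left]
    rintro _ ⟨h₃, h₄⟩ ⟨x, ⟨hxN, hxP, g, h, hgx, hxh⟩, rfl⟩
    have hx₃ : G₃.right ≤ x := by
      by_contra! hlt
      rcases le_or_gt x G₃.left with hle | hlt'
      · exact h₃.not_ge (cantorFn_le τ hgx hle)
      · exact G₃.notMem hlt' hlt hxP
    have hx₄ : x < G₄.right := lt_of_not_ge fun hle => h₄.not_ge (le_cantorFn τ hle hxh)
    exact (hab ⟨haG₃.trans (G₃.left_lt_right.trans_le hx₃), hx₄.trans hG₄b⟩).2 hxN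

end Gap

theorem ShPerfect.exists_notMem_sUnion {P : Set ℝ} (hP : ShPerfect P)
    (hcat : ∀ S : Set (Set ℝ), #S < 𝔠 → (∀ A ∈ S, IsMeagre A) → ⋃₀ S ≠ Set.univ)
    {𝒩 : Set (Set ℝ)} (h𝒩 : #𝒩 < 𝔠) (hclosed : ∀ N ∈ 𝒩, IsClosed N)
    (hportion : ∀ N ∈ 𝒩, ContainsNoPortionOf N P) : ∃ x ∈ P, x ∉ ⋃₀ 𝒩 := by
  obtain ⟨u, v, -, -, hu, hv, huv⟩ :=
    hP.1.exists_innerPt_lt isOpen_univ (by simpa using hP.2.2.nonempty)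
  obtain ⟨τ⟩ := Gap.nonempty_orderIso_rat hP hu hv huv
  by_contra! hcover
  refine hcat ((fun N => Gap.cantorFn τ '' (N ∩ (P ∩ Gap.betweenGaps P u v))) '' 𝒩)
    (mk_image_le.trans_lt h𝒩) ?_ (eq_univ_of_forall fun y => ?_)
  · rintro _ ⟨N, hN, rfl⟩
    exact (Gap.isNowhereDense_image_cantorFn τ hP (hclosed N hN) (hportion N hN)).isMeagre
  · obtain ⟨x, hx, rfl⟩ := Gap.surjOn_cantorFn τ hP.1.closed (mem_univ y)
    obtain ⟨N, hN, hxN⟩ := hcover x hx.1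
    exact ⟨_, ⟨N, hN, rfl⟩, x, ⟨hxN, hx⟩, rfl⟩

theorem ShPerfect.exists_notMem_sUnion_notMem {P : Set ℝ} (hP : ShPerfect P)
    (hcat : ∀ S : Set (Set ℝ), #S < 𝔠 → (∀ A ∈ S, IsMeagre A) → ⋃₀ S ≠ Set.univ)
    {𝒩 : Set (Set ℝ)} (h𝒩 : #𝒩 < 𝔠) (hclosed : ∀ N ∈ 𝒩, IsClosed N)
    (hportion : ∀ N ∈ 𝒩, ContainsNoPortionOf N P) {E : Set ℝ} (hE : #↥(E ∩ P) < 𝔠) :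
    ∃ x ∈ P, x ∉ ⋃₀ 𝒩 ∧ x ∉ E := by
  obtain ⟨x, hxP, hx⟩ := hP.exists_notMem_sUnion hcat (𝒩 := 𝒩 ∪ singleton '' (E ∩ P))
    ((mk_union_le _ _).trans_lt (add_lt_of_lt aleph0_le_continuum h𝒩 (mk_image_le.trans_lt hE)))
    (by rintro N (hN | ⟨y, -, rfl⟩); exacts [hclosed N hN, isClosed_singleton])
    (by rintro N (hN | ⟨y, -, rfl⟩); exacts [hportion N hN, hP.1.containsNoPortionOf_singleton y])
  exact ⟨x, hxP, fun h => hx (sUnion_mono subset_union_left h),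
    fun hxE => hx ⟨{x}, Or.inr ⟨x, ⟨hxE, hxP⟩, rfl⟩, rfl⟩⟩

theorem exists_mk_inter_lt_and_inter_nonempty {α : Type*} {κ : Cardinal} (hκ : ℵ₀ ≤ κ)
    {𝔄 𝔅 : Set (Set α)} (h𝔄 : #𝔄 ≤ κ) (h𝔅 : #𝔅 ≤ κ)
    (hpick : ∀ B ∈ 𝔅, ∀ 𝒩 ⊆ 𝔄, #𝒩 < κ → (B \ ⋃₀ 𝒩).Nonempty) :
    ∃ Q ⊆ ⋃₀ 𝔅, (∀ A ∈ 𝔄, #↥(A ∩ Q) < κ) ∧ ∀ B ∈ 𝔅, (B ∩ Q).Nonempty := by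
  obtain ⟨eA⟩ : Nonempty (𝔄 ↪ κ.ord.ToType) := by rwa [← Cardinal.le_def, mk_ord_toType]
  obtain ⟨eB⟩ : Nonempty (𝔅 ↪ κ.ord.ToType) := by rwa [← Cardinal.le_def, mk_ord_toType]
  have hpoint : ∀ B : 𝔅, ∃ x ∈ (B : Set α), ∀ A : 𝔄, eA A ≤ eB B → x ∉ (A : Set α) := by
    intro B
    have hcard : #(eA ⁻¹' Iic (eB B)) < κ := (mk_preimage_of_injective _ _ eA.injective).trans_lt
      (by simpa using mk_Iic_lt (eB B) (by simp) (by simpa using hκ))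
    obtain ⟨x, hxB, hx⟩ := hpick B B.2 (Subtype.val '' (eA ⁻¹' Iic (eB B)))
      (by rintro _ ⟨A, -, rfl⟩; exact A.2) (mk_image_le.trans_lt hcard)
    exact ⟨x, hxB, fun A hA hxA => hx ⟨A, ⟨A, hA, rfl⟩, hxA⟩⟩
  choose x hxB hx using hpoint
  refine ⟨range x, range_subset_iff.2 fun B => ⟨B, B.2, hxB B⟩, fun A hA => ?_,
    fun B hB => ⟨_, hxB ⟨B, hB⟩, mem_range_self _⟩⟩
  calc #↥(A ∩ range x) ≤ #↥(x '' (eB ⁻¹' Iio (eA ⟨A, hA⟩))) := mk_le_mk_of_subset <| by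
        rintro _ ⟨hxA, B, rfl⟩
        exact ⟨B, lt_of_not_ge fun hle => hx B ⟨A, hA⟩ hle hxA, rfl⟩
    _ ≤ #↥(eB ⁻¹' Iio (eA ⟨A, hA⟩)) := mk_image_le
    _ ≤ #↥(Iio (eA ⟨A, hA⟩)) := mk_preimage_of_injective _ _ eB.injective
    _ < κ := by simpa using mk_Iio_lt (eA ⟨A, hA⟩) (by simp)

theorem exists_Q_for_dense_family_general
    (hcat : ∀ S : Set (Set ℝ), Cardinal.mk ↥S < Cardinal.continuum →
      (∀ A ∈ S, IsMeagre A) → ⋃₀ S ≠ Set.univ)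
    (J : Type) (Dfam : J → Set ℝ)
    (D : Set ℝ)
    (hsmall : ∀ P : Set ℝ, ShPerfect P → Cardinal.mk ↥(D ∩ P) < Cardinal.continuum) :
    ∃ Q : Set ℝ, Q ⊆ Set.univ \ D ∧
      (∀ P : Set ℝ, ShPerfect P →
        (∃ i : J, P ∩ D ⊆ Dfam i ∧ DenseInP (Dfam i) P) →
        Cardinal.mk ↥(P ∩ Q) < Cardinal.continuum) ∧
      (∀ P : Set ℝ, ShPerfect P → DenseInP D P →
        (∀ a b : ℝ, InnerPt P a → InnerPt P b → a < b →
          ∀ i : J, ¬ (P ∩ D ∩ Set.Ioo a b ⊆ Dfam i)) →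
        (P ∩ Q).Nonempty) := by
  set 𝔄 := {P | ShPerfect P ∧ ∃ i, P ∩ D ⊆ Dfam i}
  set 𝔅 := {P | ShPerfect P ∧ ∀ a b, InnerPt P a → InnerPt P b → a < b →
    ∀ i, ¬ P ∩ D ∩ Ioo a b ⊆ Dfam i}
  have hcard : ∀ 𝔉 : Set (Set ℝ), (∀ P ∈ 𝔉, ShPerfect P) → #𝔉 ≤ 𝔠 := fun 𝔉 h𝔉 =>
    (mk_le_mk_of_subset fun P hP => (h𝔉 P hP).1.closed).trans mk_setOf_isClosed_le_continuum
  obtain ⟨Q, hQD, hQA, hQB⟩ := exists_mk_inter_lt_and_inter_nonempty aleph0_le_continuum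
    (hcard 𝔄 fun P hP => hP.1) (mk_image_le.trans (hcard 𝔅 fun P hP => hP.1))
    (𝔅 := (· \ D) '' 𝔅) <| by
      rintro _ ⟨B, hB, rfl⟩ 𝒩 h𝒩 h𝒩card
      obtain ⟨x, hxB, hx𝒩, hxD⟩ := hB.1.exists_notMem_sUnion_notMem hcat h𝒩card
        (fun A hA => (h𝒩 hA).1.1.closed)
        (fun A hA => let ⟨i, hi⟩ := (h𝒩 hA).2
          containsNoPortionOf_of_inter_subset hB.1.1 hi fun a b ha hb hab => hB.2 a b ha hb hab i)
        (hsmall B hB.1)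
      exact ⟨x, ⟨hxB, hxD⟩, hx𝒩⟩
  refine ⟨Q, fun x hx => ?_, fun P hP ⟨i, hi, _⟩ => hQA P ⟨hP, i, hi⟩, fun P hP _ hPB => ?_⟩
  · obtain ⟨_, ⟨B, -, rfl⟩, hxB⟩ := hQD hx
    exact ⟨mem_univ x, hxB.2⟩
  · obtain ⟨x, hxP, hxQ⟩ := hQB _ ⟨P, ⟨hP, hPB⟩, rfl⟩
    exact ⟨x, hxP.1, hxQ⟩

/-- (Shelah, Lemma 7.4; uses that ℝ is not the union of `< 2^ℵ₀` meager sets.)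
Given countable dense sets `D_i` with union `D` meeting every perfect set in `< 2^ℵ₀`
points, there is `Q ⊆ ℝ \ D` such that (A) `|P ∩ Q| < 2^ℵ₀` whenever `P ∩ D ⊆ D_i`
for some `i` with `D_i` dense in `P`, and (B) `P ∩ Q ≠ ∅` whenever `D` is dense in `P`
but on no interval of `P` is `P ∩ D` contained in a single `D_i`. -/
theorem exists_Q_for_dense_family
    (hcat : ∀ S : Set (Set ℝ), Cardinal.mk ↥S < Cardinal.continuum →
      (∀ A ∈ S, IsMeagre A) → ⋃₀ S ≠ Set.univ)
    (J : Type) (Dfam : J → Set ℝ)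
    (hct : ∀ i : J, (Dfam i).Countable) (hdense : ∀ i : J, Dense (Dfam i))
    (D : Set ℝ) (hD : D = ⋃ i, Dfam i)
    (hsmall : ∀ P : Set ℝ, ShPerfect P → Cardinal.mk ↥(D ∩ P) < Cardinal.continuum) :
    ∃ Q : Set ℝ, Q ⊆ Set.univ \ D ∧
      (∀ P : Set ℝ, ShPerfect P →
        (∃ i : J, P ∩ D ⊆ Dfam i ∧ DenseInP (Dfam i) P) →
        Cardinal.mk ↥(P ∩ Q) < Cardinal.continuum) ∧
      (∀ P : Set ℝ, ShPerfect P → DenseInP D P →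
        (∀ a b : ℝ, InnerPt P a → InnerPt P b → a < b →
          ∀ i : J, ¬ (P ∩ D ∩ Set.Ioo a b ⊆ Dfam i)) →
        (P ∩ Q).Nonempty) :=
  exists_Q_for_dense_family_general hcat J Dfam D hsmall
end
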